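/- arXiv:1706.09935 — 11 statements merged into one kernel-verified Lean document; each statement's English description precedes it below -/
import Mathlib

section
/- Let M and B be topological spaces and let Φ : M → B be a continuous surjection such that (i) every fiber of Φ is path-connected, and (ii) every point of B has an open path-connected neighborhood U ⊆ B admitting a continuous section σ : U → M of Φ (that is, Φ ∘ σ = id on U). Then for every continuous path γ : [0,1] → B, the preimage Φ⁻¹(γ([0,1])) is path-connected. -/
/-- Convex combination of two points of the unit interval. -/
noncomputable def segPt (t t' s : unitInterval) : unitInterval :=
  ⟨(1 - s.1) * t.1 + s.1 * t'.1,
    (convex_Icc (0:ℝ) 1) t.2 t'.2 (sub_nonneg.2 s.2.2) s.2.1 (by ring)⟩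

lemma segPt_zero (t t' : unitInterval) : segPt t t' 0 = t := Subtype.ext (by simp [segPt])

lemma segPt_one (t t' : unitInterval) : segPt t t' 1 = t' := Subtype.ext (by simp [segPt])

lemma segPt_continuous (t t' : unitInterval) : Continuous (segPt t t') := by
  apply Continuous.subtype_mk
  fun_prop

lemma segPt_dist (t t' s : unitInterval) : dist (segPt t t' s) t ≤ dist t' t := by
  have h : (segPt t t' s : ℝ) - t = s.1 * ((t':ℝ) - t) := by simp [segPt]; ring
  rw [Subtype.dist_eq, Subtype.dist_eq, Real.dist_eq, Real.dist_eq, h, abs_mul,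
    abs_of_nonneg s.2.1]
  exact mul_le_of_le_one_left (abs_nonneg _) s.2.2

lemma seg_joined {M B : Type*} [TopologicalSpace M] [TopologicalSpace B]
    (Φ : M → B) (γ : unitInterval → B) (hγ : Continuous γ)
    (U : Set B) (σ : U → M) (hσc : Continuous σ) (hσ : ∀ u : U, Φ (σ u) = (u : B))
    (t t' : unitInterval) (hseg : ∀ s, γ (segPt t t' s) ∈ U) :
    JoinedIn (Φ ⁻¹' (Set.range γ)) (σ ⟨γ t, by simpa [segPt_zero] using hseg 0⟩)
      (σ ⟨γ t', by simpa [segPt_one] using hseg 1⟩) := by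
  set f : unitInterval → M := fun s => σ ⟨γ (segPt t t' s), hseg s⟩ with hf
  have hfc : Continuous f :=
    hσc.comp (Continuous.subtype_mk (hγ.comp (segPt_continuous t t')) _)
  refine ⟨⟨⟨f, hfc⟩, ?_, ?_⟩, ?_⟩
  · exact congrArg σ (Subtype.ext (congrArg γ (segPt_zero t t')))
  · exact congrArg σ (Subtype.ext (congrArg γ (segPt_one t t')))
  · intro s
    show Φ (f s) ∈ Set.range γ
    rw [hf]
    simp only [hσ]
    exact ⟨_, rfl⟩

/-- Let `Φ : M → B` be a continuous surjection such that every fiber is path-connected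
and every point of `B` has an open path-connected neighborhood `U` over which `Φ`
admits a continuous section.  Then for every continuous path `γ : [0,1] → B`, the
preimage `Φ⁻¹(γ([0,1]))` is path-connected. -/
theorem stmt1 {M B : Type*} [TopologicalSpace M] [TopologicalSpace B]
    (Φ : M → B) (hΦ : Continuous Φ) (hsurj : Function.Surjective Φ)
    (hfib : ∀ b : B, IsPathConnected (Φ ⁻¹' {b}))
    (hsec : ∀ b : B, ∃ U : Set B, IsOpen U ∧ b ∈ U ∧ IsPathConnected U ∧
      ∃ σ : U → M, Continuous σ ∧ ∀ u : U, Φ (σ u) = (u : B))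
    (γ : unitInterval → B) (hγ : Continuous γ) :
    IsPathConnected (Φ ⁻¹' (Set.range γ)) := by
  obtain ⟨x₀, hx₀⟩ := hsurj (γ 0)
  set P : Set M := Φ ⁻¹' (Set.range γ) with hPdef
  have hx₀P : x₀ ∈ P := ⟨0, hx₀.symm⟩
  -- fibers over points of the range are contained in P
  have hfibP : ∀ t : unitInterval, Φ ⁻¹' {γ t} ⊆ P := by
    intro t x hx
    exact ⟨t, (Set.mem_preimage.mp hx).symm⟩
  set T : Set unitInterval := {t | ∃ y, Φ y = γ t ∧ JoinedIn P x₀ y} with hTdef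
  -- any point of the fiber over γ t, t ∈ T, is joined to x₀ in P
  have hTfib : ∀ t ∈ T, ∀ y, Φ y = γ t → JoinedIn P x₀ y := by
    intro t ht y hy
    obtain ⟨y', hy', hj⟩ := ht
    have h2 : JoinedIn (Φ ⁻¹' {γ t}) y' y :=
      (hfib (γ t)).joinedIn y' hy' y hy
    exact hj.trans (h2.mono (hfibP t))
  have h0 : (0 : unitInterval) ∈ T := ⟨x₀, hx₀, JoinedIn.refl hx₀P⟩
  have hTopen : IsOpen T := by
    rw [Metric.isOpen_iff]
    intro t ht
    obtain ⟨U, hUo, hUm, hUpc, σ, hσc, hσ⟩ := hsec (γ t)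
    have hV : IsOpen (γ ⁻¹' U) := hUo.preimage hγ
    obtain ⟨ε, hε, hball⟩ := Metric.isOpen_iff.mp hV t hUm
    refine ⟨ε, hε, ?_⟩
    intro t' ht'
    have hseg : ∀ s, γ (segPt t t' s) ∈ U := by
      intro s
      apply hball
      calc dist (segPt t t' s) t ≤ dist t' t := segPt_dist t t' s
        _ < ε := ht'
    have hjoin := seg_joined Φ γ hγ U σ hσc hσ t t' hseg
    have hx₀σ : JoinedIn P x₀ (σ ⟨γ t, by simpa [segPt_zero] using hseg 0⟩) :=
      hTfib t ht _ (hσ _)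
    exact ⟨σ ⟨γ t', by simpa [segPt_one] using hseg 1⟩, hσ _, hx₀σ.trans hjoin⟩
  have hTclosed : IsClosed T := by
    rw [← closure_subset_iff_isClosed]
    intro t ht
    obtain ⟨U, hUo, hUm, hUpc, σ, hσc, hσ⟩ := hsec (γ t)
    have hV : IsOpen (γ ⁻¹' U) := hUo.preimage hγ
    obtain ⟨ε, hε, hball⟩ := Metric.isOpen_iff.mp hV t hUm
    obtain ⟨t', ht'T, ht'd⟩ := Metric.mem_closure_iff.mp ht ε hε
    have hseg : ∀ s, γ (segPt t t' s) ∈ U := by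
      intro s
      apply hball
      calc dist (segPt t t' s) t ≤ dist t' t := segPt_dist t t' s
        _ < ε := by rwa [dist_comm]
    have hjoin := seg_joined Φ γ hγ U σ hσc hσ t t' hseg
    have hx₀σ : JoinedIn P x₀ (σ ⟨γ t', by simpa [segPt_one] using hseg 1⟩) :=
      hTfib t' ht'T _ (hσ _)
    exact ⟨σ ⟨γ t, by simpa [segPt_zero] using hseg 0⟩, hσ _, hx₀σ.trans hjoin.symm⟩
  have hTuniv : T = Set.univ :=
    IsClopen.eq_univ ⟨hTclosed, hTopen⟩ ⟨0, h0⟩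
  refine ⟨x₀, hx₀P, ?_⟩
  intro y hy
  obtain ⟨t, htγ⟩ := hy
  have : t ∈ T := hTuniv ▸ Set.mem_univ t
  exact hTfib t this y htγ.symm
end

section
/- Let M be a topological space and let Φ : M → ℝ² be a continuous map with image B := Φ(M), such that (i) every fiber of Φ is path-connected, and (ii) every point of B has an open path-connected neighborhood U ⊆ B admitting a continuous section σ : U → M of Φ. Let J := pr₁ ∘ Φ, where pr₁ : ℝ² → ℝ is the projection onto the first coordinate. Then the following are equivalent: (a) for every x₀ ∈ ℝ the fiber J⁻¹(x₀) is either empty or path-connected; (b) for every x₀ ∈ ℝ the vertical slice B ∩ ({x₀} × ℝ) is either empty or path-connected. -/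
/-- Let `Φ : M → ℝ²` be continuous with image `B = Φ(M)`, with path-connected fibers
and local continuous sections over open path-connected subsets of `B`.  Let
`J = pr₁ ∘ Φ`.  Then every fiber of `J` is empty or path-connected if and only if
every vertical slice `B ∩ ({x₀} × ℝ)` is empty or path-connected. -/
theorem stmt2 {M : Type*} [TopologicalSpace M] (Φ : M → ℝ × ℝ) (hΦ : Continuous Φ)
    (hfib : ∀ c : ℝ × ℝ, c ∈ Set.range Φ → IsPathConnected (Φ ⁻¹' {c}))
    (hsec : ∀ c : Set.range Φ, ∃ U : Set (Set.range Φ), IsOpen U ∧ c ∈ U ∧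
      IsPathConnected U ∧ ∃ σ : U → M, Continuous σ ∧
        ∀ u : U, Φ (σ u) = ((u : Set.range Φ) : ℝ × ℝ)) :
    (∀ x₀ : ℝ, (fun m => (Φ m).1) ⁻¹' {x₀} = ∅ ∨
        IsPathConnected ((fun m => (Φ m).1) ⁻¹' {x₀})) ↔
      (∀ x₀ : ℝ, Set.range Φ ∩ {p : ℝ × ℝ | p.1 = x₀} = ∅ ∨
        IsPathConnected (Set.range Φ ∩ {p : ℝ × ℝ | p.1 = x₀})) := by
  constructor
  · -- forward direction: image of the fiber is the slice
    intro h x₀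
    have himg : Set.range Φ ∩ {p : ℝ × ℝ | p.1 = x₀}
        = Φ '' ((fun m => (Φ m).1) ⁻¹' {x₀}) := by
      ext p
      constructor
      · rintro ⟨⟨m, rfl⟩, hp⟩
        exact ⟨m, hp, rfl⟩
      · rintro ⟨m, hm, rfl⟩
        exact ⟨⟨m, rfl⟩, hm⟩
    rcases h x₀ with h0 | h1
    · left
      rw [himg, h0, Set.image_empty]
    · right
      rw [himg]
      exact h1.image hΦ
  · -- backward direction
    intro h x₀
    set F : Set M := (fun m => (Φ m).1) ⁻¹' {x₀} with hF
    set S : Set (ℝ × ℝ) := Set.range Φ ∩ {p : ℝ × ℝ | p.1 = x₀} with hS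
    have hmemS : ∀ m ∈ F, Φ m ∈ S := fun m hm => ⟨Set.mem_range_self m, hm⟩
    rcases h x₀ with h0 | h1
    · left
      ext m
      simp only [Set.mem_empty_iff_false, iff_false]
      intro hm
      exact Set.eq_empty_iff_forall_notMem.mp h0 _ (hmemS m hm)
    · right
      -- the fiber of `J` over `x₀` is the preimage of the slice `S`
      have hfibsub : ∀ c ∈ S, Φ ⁻¹' {c} ⊆ F := by
        rintro c hc m hm
        simp only [Set.mem_preimage, Set.mem_singleton_iff] at hm
        show (Φ m).1 ∈ ({x₀} : Set ℝ)
        rw [hm]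
        exact hc.2
      obtain ⟨c₀, hc₀S, -⟩ := id h1
      obtain ⟨m₀, hm₀⟩ := hc₀S.1
      have hm₀F : m₀ ∈ F := by
        show (Φ m₀).1 ∈ ({x₀} : Set ℝ)
        rw [hm₀]
        exact hc₀S.2
      -- order-convexity of the slice in the vertical direction
      have hord : ∀ y₁ y₂ : ℝ, (x₀, y₁) ∈ S → (x₀, y₂) ∈ S →
          ∀ y ∈ Set.uIcc y₁ y₂, (x₀, y) ∈ S := by
        intro y₁ y₂ h₁ h₂ y hy
        have hA : IsPreconnected (Prod.snd '' S) :=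
          (h1.image continuous_snd).isConnected.isPreconnected
        have hAy : y ∈ Prod.snd '' S := by
          have := hA.ordConnected.uIcc_subset ⟨(x₀, y₁), h₁, rfl⟩ ⟨(x₀, y₂), h₂, rfl⟩
          exact this hy
        obtain ⟨p, hpS, hp2⟩ := hAy
        have hp1 : p.1 = x₀ := hpS.2
        have : p = (x₀, y) := by
          ext
          · exact hp1
          · exact hp2
        rwa [this] at hpS
      -- the key local property
      set P : ℝ × ℝ → Prop := fun c => ∃ m, Φ m = c ∧ JoinedIn F m₀ m with hP
      have key : ∀ c, c ∈ S → ∃ ε : ℝ, 0 < ε ∧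
          ∀ c', c' ∈ S → dist c' c < ε → (P c ↔ P c') := by
        intro c hc
        obtain ⟨U, hUopen, hcU, _hUpc, σ, hσcont, hσ⟩ := hsec ⟨c, hc.1⟩
        obtain ⟨V, hVopen, hVU⟩ := isOpen_induced_iff.mp hUopen
        have hcV : c ∈ V := by
          have : (⟨c, hc.1⟩ : Set.range Φ) ∈ Subtype.val ⁻¹' V := by rw [hVU]; exact hcU
          exact this
        obtain ⟨ε, hε, hball⟩ := Metric.isOpen_iff.mp hVopen c hcV
        refine ⟨ε, hε, fun c' hc' hdist => ?_⟩
        have hc'U : (⟨c', hc'.1⟩ : Set.range Φ) ∈ U := by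
          rw [← hVU]
          exact hball (by rwa [Metric.mem_ball])
        -- the straight segment inside the slice
        set y : unitInterval → ℝ := fun t => (1 - (t : ℝ)) * c.2 + (t : ℝ) * c'.2 with hy
        set p : unitInterval → ℝ × ℝ := fun t => (x₀, y t) with hp
        have hc2S : (x₀, c.2) ∈ S := by
          have : c = (x₀, c.2) := by ext; exacts [hc.2, rfl]
          rwa [← this]
        have hc'2S : (x₀, c'.2) ∈ S := by
          have : c' = (x₀, c'.2) := by ext; exacts [hc'.2, rfl]
          rwa [← this]
        have hyIcc : ∀ t : unitInterval, y t ∈ Set.uIcc c.2 c'.2 := by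
          intro t
          have : y t ∈ segment ℝ c.2 c'.2 :=
            ⟨1 - (t : ℝ), (t : ℝ), by linarith [t.2.2], t.2.1, by ring, rfl⟩
          rwa [segment_eq_uIcc] at this
        have hpS : ∀ t : unitInterval, p t ∈ S :=
          fun t => hord c.2 c'.2 hc2S hc'2S (y t) (hyIcc t)
        have hpV : ∀ t : unitInterval, p t ∈ V := by
          intro t
          apply hball
          rw [Metric.mem_ball]
          have h2 : dist (y t) c.2 ≤ dist c'.2 c.2 := by
            rw [Real.dist_eq, Real.dist_eq]
            have : y t - c.2 = (t : ℝ) * (c'.2 - c.2) := by rw [hy]; ring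
            rw [this, abs_mul, abs_of_nonneg t.2.1]
            calc (t : ℝ) * |c'.2 - c.2| ≤ 1 * |c'.2 - c.2| := by
                  apply mul_le_mul_of_nonneg_right t.2.2 (abs_nonneg _)
              _ = |c'.2 - c.2| := one_mul _
          have h3 : dist c'.2 c.2 ≤ dist c' c := le_max_right _ _
          have h4 : dist (p t) c ≤ dist (y t) c.2 := by
            rw [Prod.dist_eq]
            apply max_le _ le_rfl
            have : dist (p t).1 c.1 = 0 := by
              rw [Real.dist_eq, hp]
              simp [hc.2.symm]
            rw [this]
            exact dist_nonneg
          calc dist (p t) c ≤ dist c'.2 c.2 := le_trans h4 h2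
            _ ≤ dist c' c := h3
            _ < ε := hdist
        have hpU : ∀ t : unitInterval, (⟨p t, (hpS t).1⟩ : Set.range Φ) ∈ U := by
          intro t
          rw [← hVU]
          exact hpV t
        -- the lifted path
        have hjoin : JoinedIn F (σ ⟨⟨c, hc.1⟩, hcU⟩) (σ ⟨⟨c', hc'.1⟩, hc'U⟩) := by
          have hcp0 : p 0 = c := by
            ext
            · exact hc.2.symm
            · show y 0 = c.2
              simp [hy]
          have hcp1 : p 1 = c' := by
            ext
            · exact hc'.2.symm
            · show y 1 = c'.2
              simp [hy]
          refine ⟨⟨⟨fun t => σ ⟨⟨p t, (hpS t).1⟩, hpU t⟩, ?_⟩, ?_, ?_⟩, ?_⟩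
          · apply hσcont.comp
            apply Continuous.subtype_mk
            apply Continuous.subtype_mk
            rw [hp]
            apply Continuous.prodMk continuous_const
            rw [hy]
            fun_prop
          · exact congrArg σ (Subtype.ext (Subtype.ext hcp0))
          · exact congrArg σ (Subtype.ext (Subtype.ext hcp1))
          · intro t
            show σ _ ∈ F
            have := hσ ⟨⟨p t, (hpS t).1⟩, hpU t⟩
            show (Φ _).1 ∈ ({x₀} : Set ℝ)
            rw [this]
            rfl
        have hσc : Φ (σ ⟨⟨c, hc.1⟩, hcU⟩) = c := hσ _
        have hσc' : Φ (σ ⟨⟨c', hc'.1⟩, hc'U⟩) = c' := hσ _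
        constructor
        · rintro ⟨m, hmc, hjm⟩
          refine ⟨σ ⟨⟨c', hc'.1⟩, hc'U⟩, hσc', ?_⟩
          have hmid : JoinedIn F m (σ ⟨⟨c, hc.1⟩, hcU⟩) := by
            have := (hfib c hc.1).joinedIn m (by simpa using hmc)
              (σ ⟨⟨c, hc.1⟩, hcU⟩) (by simpa using hσc)
            exact this.mono (hfibsub c hc)
          exact (hjm.trans hmid).trans hjoin
        · rintro ⟨m, hmc, hjm⟩
          refine ⟨σ ⟨⟨c, hc.1⟩, hcU⟩, hσc, ?_⟩
          have hmid : JoinedIn F m (σ ⟨⟨c', hc'.1⟩, hc'U⟩) := by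
            have := (hfib c' hc'.1).joinedIn m (by simpa using hmc)
              (σ ⟨⟨c', hc'.1⟩, hc'U⟩) (by simpa using hσc')
            exact this.mono (hfibsub c' hc')
          exact (hjm.trans hmid).trans hjoin.symm
      -- connectedness argument: P holds on all of S
      choose! ε hεpos hεkey using key
      have hPc₀ : P c₀ := ⟨m₀, hm₀, JoinedIn.refl hm₀F⟩
      have hall : ∀ c ∈ S, P c := by
        by_contra hcon
        push_neg at hcon
        obtain ⟨c₁, hc₁S, hc₁⟩ := hcon
        set u : Set (ℝ × ℝ) := ⋃ c ∈ {c | c ∈ S ∧ P c}, Metric.ball c (ε c) with hu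
        set v : Set (ℝ × ℝ) := ⋃ c ∈ {c | c ∈ S ∧ ¬ P c}, Metric.ball c (ε c) with hv
        have huo : IsOpen u := isOpen_biUnion fun _ _ => Metric.isOpen_ball
        have hvo : IsOpen v := isOpen_biUnion fun _ _ => Metric.isOpen_ball
        have hsub : S ⊆ u ∪ v := by
          intro c hc
          by_cases hPc : P c
          · exact Or.inl (Set.mem_biUnion ⟨hc, hPc⟩ (Metric.mem_ball_self (hεpos c hc)))
          · exact Or.inr (Set.mem_biUnion ⟨hc, hPc⟩ (Metric.mem_ball_self (hεpos c hc)))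
        have hune : (S ∩ u).Nonempty :=
          ⟨c₀, hc₀S, Set.mem_biUnion ⟨hc₀S, hPc₀⟩ (Metric.mem_ball_self (hεpos c₀ hc₀S))⟩
        have hvne : (S ∩ v).Nonempty :=
          ⟨c₁, hc₁S, Set.mem_biUnion ⟨hc₁S, hc₁⟩ (Metric.mem_ball_self (hεpos c₁ hc₁S))⟩
        obtain ⟨x, hxS, hxu, hxv⟩ :=
          h1.isConnected.isPreconnected u v huo hvo hsub hune hvne
        have hPx : P x := by
          obtain ⟨c, hc, hxball⟩ := Set.mem_iUnion₂.mp hxu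
          exact (hεkey c hc.1 x hxS (Metric.mem_ball.mp hxball)).mp hc.2
        have hnPx : ¬ P x := by
          obtain ⟨c, hc, hxball⟩ := Set.mem_iUnion₂.mp hxv
          exact fun h => hc.2 ((hεkey c hc.1 x hxS (Metric.mem_ball.mp hxball)).mpr h)
        exact hnPx hPx
      -- conclude
      refine ⟨m₀, hm₀F, ?_⟩
      intro m hm
      obtain ⟨m', hm', hj⟩ := hall (Φ m) (hmemS m hm)
      have hfin : JoinedIn F m' m := by
        have := (hfib (Φ m) ⟨m, rfl⟩).joinedIn m' (by simpa using hm') m rfl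
        exact this.mono (hfibsub (Φ m) (hmemS m hm))
      exact hj.trans hfin
end

section
/- Let B ⊆ ℝ² be a set such that for every x₀ ∈ ℝ the vertical slice B ∩ ({x₀} × ℝ) is either empty or path-connected. Then for every x₀ ∈ ℝ such that the vertical line {x₀} × ℝ meets the interior Int(B) of B in ℝ², the vertical slice Int(B) ∩ ({x₀} × ℝ) is path-connected. -/
/-!
If `(x₀, a)` and `(x₀, b)` are interior points of `B`, then for all `x` in a neighbourhood `U`
of `x₀` both `(x, a)` and `(x, b)` lie in `B`, hence so does the segment between them, by
connectedness of the slice. The open box `U × (a, b)` thus lies in `B`, so the interior slice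
is an interval, which is convex and therefore path-connected.
-/

open Set Topology

lemma inter_setOf_fst_eq {X Y : Type*} (B : Set (X × Y)) (x : X) :
    B ∩ {p | p.1 = x} = Prod.mk x '' (Prod.mk x ⁻¹' B) := by
  ext ⟨x', y⟩
  constructor
  · rintro ⟨hB, rfl : x' = x⟩
    exact ⟨y, hB, rfl⟩
  · rintro ⟨y, hB, ⟨⟩⟩
    exact ⟨hB, rfl⟩

section

variable {X Y : Type*} [TopologicalSpace X] [TopologicalSpace Y] [LinearOrder Y]
  [OrderClosedTopology Y] {B : Set (X × Y)}

lemma ordConnected_preimage_prodMk_of_isPreconnected {x : X}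
    (h : IsPreconnected (B ∩ {p | p.1 = x})) : OrdConnected (Prod.mk x ⁻¹' B) := by
  rw [inter_setOf_fst_eq] at h
  exact ((isEmbedding_prodMkRight x).isInducing.isPreconnected_image.mp h).ordConnected

lemma ordConnected_preimage_prodMk_interior (hB : ∀ x, OrdConnected (Prod.mk x ⁻¹' B)) (x : X) :
    OrdConnected (Prod.mk x ⁻¹' interior B) := by
  refine ⟨fun a ha b hb c hc => ?_⟩
  rcases hc.1.eq_or_lt with rfl | hac
  · exact ha
  rcases hc.2.eq_or_lt with rfl | hcb
  · exact hb
  set U : Set X := (fun x' => (x', a)) ⁻¹' interior B ∩ (fun x' => (x', b)) ⁻¹' interior B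
  have hU : IsOpen U :=
    (isOpen_interior.preimage (by fun_prop)).inter (isOpen_interior.preimage (by fun_prop))
  have hbox : U ×ˢ Ioo a b ⊆ B := fun ⟨x', _⟩ ⟨hx', hy⟩ =>
    (hB x').out (interior_subset (s := B) hx'.1) (interior_subset (s := B) hx'.2)
      (Ioo_subset_Icc_self hy)
  exact (hU.prod isOpen_Ioo).subset_interior_iff.mpr hbox ⟨⟨ha, hb⟩, hac, hcb⟩

end

/-- If every vertical slice of `B ⊆ ℝ²` is empty or path-connected, then for every
`x₀` such that the vertical line `{x₀} × ℝ` meets the interior of `B`, the vertical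
slice `Int(B) ∩ ({x₀} × ℝ)` is path-connected. -/
theorem stmt3 (B : Set (ℝ × ℝ))
    (hslice : ∀ x₀ : ℝ, B ∩ {p : ℝ × ℝ | p.1 = x₀} = ∅ ∨
      IsPathConnected (B ∩ {p : ℝ × ℝ | p.1 = x₀}))
    (x₀ : ℝ) (hx : (interior B ∩ {p : ℝ × ℝ | p.1 = x₀}).Nonempty) :
    IsPathConnected (interior B ∩ {p : ℝ × ℝ | p.1 = x₀}) := by
  have hpre (x : ℝ) : IsPreconnected (B ∩ {p | p.1 = x}) :=
    (hslice x).elim (fun h => h ▸ isPreconnected_empty) (·.isConnected.isPreconnected)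
  have hS := ordConnected_preimage_prodMk_interior
    (fun x => ordConnected_preimage_prodMk_of_isPreconnected (hpre x)) x₀
  rw [inter_setOf_fst_eq] at hx ⊢
  exact (hS.convex.isPathConnected hx.of_image).image (isEmbedding_prodMkRight x₀).continuous
end

section
/- Let U ⊆ ℝ² be an open, connected set such that for every x₀ ∈ ℝ the vertical slice U ∩ ({x₀} × ℝ) is either empty or connected. Then U is a contractible topological space. -/
/-!
The vertical slices of `U` and its shadow `I` on the first axis are intervals. Openness of `U`
gives local constant sections of the slices, which a partition of unity glues (the slices being
convex) into a continuous section `s` over `I`. Sliding every point of `U` vertically onto the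
graph of `s` is a homotopy equivalence between `U` and the contractible interval `I`.
-/

open Set Topology ContinuousMap

theorem isPreconnected_setOf_prodMk_mem {X Y : Type*} [TopologicalSpace X] [TopologicalSpace Y]
    {U : Set (X × Y)} {x : X} (h : IsPreconnected (U ∩ {p | p.1 = x})) :
    IsPreconnected {y | (x, y) ∈ U} := by
  convert h.image Prod.snd continuous_snd.continuousOn
  ext y
  constructor
  · exact fun hy => ⟨(x, y), ⟨hy, rfl⟩, rfl⟩
  · rintro ⟨⟨_, y⟩, ⟨hy, rfl⟩, rfl⟩
    exact hy

section FiberwiseConvex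

variable {X E : Type*} [AddCommGroup E] [Module ℝ E] [TopologicalSpace E]
  [ContinuousAdd E] [ContinuousSMul ℝ E] {U : Set (X × E)}

theorem exists_continuous_section_of_isOpen [PseudoEMetricSpace X] (hU : IsOpen U)
    (hfiber : ∀ x, Convex ℝ {y | (x, y) ∈ U}) :
    ∃ s : C(Prod.fst '' U, E), ∀ x : Prod.fst '' U, ((x : X), s x) ∈ U := by
  refine exists_continuous_forall_mem_convex_of_local_const
    (t := fun x : Prod.fst '' U => {y | ((x : X), y) ∈ U}) (fun x => hfiber x) ?_
  rintro ⟨_, p, hp, rfl⟩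
  have hopen : IsOpen {x : Prod.fst '' U | ((x : X), p.2) ∈ U} := hU.preimage (by fun_prop)
  exact ⟨p.2, hopen.mem_nhds hp⟩

noncomputable def homotopyEquivImageFst [TopologicalSpace X]
    (hfiber : ∀ x, Convex ℝ {y | (x, y) ∈ U})
    (s : C(Prod.fst '' U, E)) (hs : ∀ x : Prod.fst '' U, ((x : X), s x) ∈ U) :
    U ≃ₕ Prod.fst '' U where
  toFun := ⟨fun p => ⟨p.1.1, mem_image_of_mem _ p.2⟩, by fun_prop⟩
  invFun := ⟨fun x => ⟨(x, s x), hs x⟩, by fun_prop⟩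
  left_inv := by
    have hmem (t : unitInterval) (p : U) :
        (p.1.1, (1 - (t : ℝ)) • s ⟨p.1.1, mem_image_of_mem _ p.2⟩ + (t : ℝ) • p.1.2) ∈
          U :=
      hfiber p.1.1 (hs ⟨p.1.1, _⟩) p.2 (by simpa using t.2.2) t.2.1 (by ring)
    exact ⟨{ toFun := fun q => ⟨_, hmem q.1 q.2⟩
             continuous_toFun := by fun_prop
             map_zero_left := fun p => by simp
             map_one_left := fun p => by simp }⟩
  right_inv := ContinuousMap.Homotopic.refl _

end FiberwiseConvex

/-- An open connected subset `U ⊆ ℝ²` all of whose vertical slices are empty or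
connected is a contractible topological space. -/
theorem stmt4 (U : Set (ℝ × ℝ)) (hopen : IsOpen U) (hconn : IsConnected U)
    (hslice : ∀ x₀ : ℝ, U ∩ {p : ℝ × ℝ | p.1 = x₀} = ∅ ∨
      IsConnected (U ∩ {p : ℝ × ℝ | p.1 = x₀})) :
    ContractibleSpace U := by
  have hfiber (x : ℝ) : Convex ℝ {y | (x, y) ∈ U} := by
    refine (isPreconnected_setOf_prodMk_mem ?_).convex
    exact (hslice x).elim (fun h => h ▸ isPreconnected_empty) IsConnected.isPreconnected
  obtain ⟨s, hs⟩ := exists_continuous_section_of_isOpen hopen hfiber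
  have : ContractibleSpace (Prod.fst '' U) :=
    (hconn.isPreconnected.image _ continuous_fst.continuousOn).convex.contractibleSpace
      (hconn.nonempty.image _)
  exact (homotopyEquivImageFst hfiber s hs).contractibleSpace
end

section
/- Let B ⊆ ℝ² and let (c_i)_{i ∈ I} = ((x_i, y_i))_{i ∈ I} be a countable family of points of the interior Int(B) of B, with signs ε = (ε_i)_{i ∈ I} ∈ {+1,−1}^I. If S_ε := B \ ⋃_{i ∈ I} l^{ε_i}(c_i) is path-connected, then for all i, j ∈ I with x_i = x_j and y_i > y_j one has ε_i ≥ ε_j; that is, it cannot happen that ε_i = −1 and ε_j = +1. -/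
/-- The vertical cut of `B ⊆ ℝ²` at the point `c` with sign `ε`:
`l^ε(c) = B ∩ {(x,y) | x = c.1 ∧ ε·y ≥ ε·c.2}`. -/
def vcut (B : Set (ℝ × ℝ)) (c : ℝ × ℝ) (ε : ℝ) : Set (ℝ × ℝ) :=
  {p : ℝ × ℝ | p ∈ B ∧ p.1 = c.1 ∧ ε * c.2 ≤ ε * p.2}

/-!
If `ε i = -1` and `ε j = +1`, the downward cut at `c i` and the upward cut at the lower point
`c j` together cover the whole vertical line `x = x₀` inside `B`, so `S_ε` misses that line.
Since `c i` is interior and only countably many abscissas carry cuts, `S_ε` has points on both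
sides of the line; by the intermediate value theorem for the first coordinate, no connected
set can contain both.
-/

lemma mem_vcut_or_mem_vcut_of_fst_eq {B : Set (ℝ × ℝ)} {c c' p : ℝ × ℝ} {e e' : ℝ}
    (he : e < 0) (he' : 0 < e') (hx : c.1 = c'.1) (hy : c'.2 ≤ c.2)
    (hpB : p ∈ B) (hpx : p.1 = c.1) :
    p ∈ vcut B c e ∨ p ∈ vcut B c' e' := by
  rcases le_total p.2 c.2 with hp | hp
  · exact Or.inl ⟨hpB, hpx, mul_le_mul_of_nonpos_left hp he.le⟩
  · exact Or.inr ⟨hpB, hpx.trans hx, mul_le_mul_of_nonneg_left (hy.trans hp) he'.le⟩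

lemma exists_horizontal_neighbors_notMem_of_countable {B : Set (ℝ × ℝ)} {z : ℝ × ℝ}
    (hz : z ∈ interior B) {X : Set ℝ} (hX : X.Countable) :
    (∃ a ∉ X, a < z.1 ∧ (a, z.2) ∈ B) ∧ (∃ b ∉ X, z.1 < b ∧ (b, z.2) ∈ B) := by
  have hU : (fun t : ℝ => (t, z.2)) ⁻¹' interior B ∈ nhds z.1 :=
    (continuous_id.prodMk continuous_const).continuousAt.preimage_mem_nhds
      (isOpen_interior.mem_nhds hz)
  obtain ⟨δ, hδ, hball⟩ := Metric.mem_nhds_iff.1 hU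
  have hsub : Set.Ioo (z.1 - δ) (z.1 + δ) ⊆ (fun t : ℝ => (t, z.2)) ⁻¹' B := by
    rw [← Real.ball_eq_Ioo]
    exact hball.trans (Set.preimage_mono interior_subset)
  have hdense := hX.dense_compl ℝ
  obtain ⟨a, haX, ha₁, ha₂⟩ := hdense.exists_between (sub_lt_self z.1 hδ)
  obtain ⟨b, hbX, hb₁, hb₂⟩ := hdense.exists_between (lt_add_of_pos_right z.1 hδ)
  exact ⟨⟨a, haX, ha₂, hsub ⟨ha₁, ha₂.trans (lt_add_of_pos_right z.1 hδ)⟩⟩,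
    ⟨b, hbX, hb₁, hsub ⟨(sub_lt_self z.1 hδ).trans hb₁, hb₂⟩⟩⟩

/-- If the complement `S_ε = B \ l^ε` of the vertical cuts at countably many points of
the interior of `B` is path-connected, then whenever two of the points lie on the same
vertical line with `c i` above `c j`, one has `ε i ≥ ε j`. -/
theorem stmt6 {I : Type*} [Countable I] (B : Set (ℝ × ℝ))
    (c : I → ℝ × ℝ) (hc : ∀ i, c i ∈ interior B)
    (ε : I → ℝ) (hε : ∀ i, ε i = 1 ∨ ε i = -1)
    (hpc : IsPathConnected (B \ ⋃ i, vcut B (c i) (ε i)))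
    (i j : I) (hx : (c i).1 = (c j).1) (hy : (c j).2 < (c i).2) :
    ε j ≤ ε i := by
  by_contra! hlt
  have hsigns : ε i < 0 ∧ 0 < ε j := by
    rcases hε i with h | h <;> rcases hε j with h' | h' <;> constructor <;> linarith
  set X := Set.range fun k => (c k).1
  have hoff : ∀ p ∈ B, p.1 ∉ X → p ∈ B \ ⋃ k, vcut B (c k) (ε k) := fun p hpB hpX =>
    ⟨hpB, fun hp => hpX <| by
      obtain ⟨k, hk⟩ := Set.mem_iUnion.1 hp
      exact ⟨k, hk.2.1.symm⟩⟩
  obtain ⟨⟨a, haX, ha, haB⟩, ⟨b, hbX, hb, hbB⟩⟩ :=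
    exists_horizontal_neighbors_notMem_of_countable (hc i) (Set.countable_range fun k => (c k).1)
  obtain ⟨p, ⟨hpB, hpcut⟩, hpx⟩ := hpc.isConnected.isPreconnected.intermediate_value
    (hoff _ haB haX) (hoff _ hbB hbX) continuous_fst.continuousOn ⟨ha.le, hb.le⟩
  rcases mem_vcut_or_mem_vcut_of_fst_eq hsigns.1 hsigns.2 hx hy.le hpB hpx with h | h
  · exact hpcut (Set.mem_iUnion_of_mem i h)
  · exact hpcut (Set.mem_iUnion_of_mem j h)
end

section
/- Let B ⊆ ℝ² be such that for every x₀ ∈ ℝ the vertical slice B ∩ ({x₀} × ℝ) is either empty or connected. Let (c_i)_{i ∈ I} = ((x_i, y_i))_{i ∈ I} be a family of pairwise distinct points of the interior Int(B), with only finitely many c_i on each vertical line, and let ε = (ε_i)_{i∈I} ∈ {+1,−1}^I satisfy: for all i, j ∈ I with x_i = x_j and y_i > y_j, ε_i ≥ ε_j. Then for every x̄ ∈ pr₁(B), the vertical slice S_ε ∩ ({x̄} × ℝ) is nonempty and connected, where S_ε := B \ ⋃_{i ∈ I} l^{ε_i}(c_i). -/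
open Set Filter Topology

theorem inter_fst_eq_image_mk {X Y : Type*} (A : Set (X × Y)) (x₀ : X) :
    A ∩ {p | p.1 = x₀} = Prod.mk x₀ '' (Prod.mk x₀ ⁻¹' A) := by
  ext ⟨x, y⟩
  simp only [mem_inter_iff, mem_ofPred_eq, mem_image, mem_preimage, Prod.mk.injEq]
  constructor
  · rintro ⟨h, rfl⟩; exact ⟨y, h, rfl, rfl⟩
  · rintro ⟨y, h, rfl, rfl⟩; exact ⟨h, rfl⟩

theorem isConnected_inter_fst_iff {X Y : Type*} [TopologicalSpace X] [TopologicalSpace Y]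
    (A : Set (X × Y)) (x₀ : X) :
    IsConnected (A ∩ {p | p.1 = x₀}) ↔ IsConnected (Prod.mk x₀ ⁻¹' A) := by
  rw [inter_fst_eq_image_mk]
  exact and_congr image_nonempty (isEmbedding_prodMkRight x₀).isInducing.isPreconnected_image

theorem preimage_mk_diff_iUnion_vcut {I : Type*} (B : Set (ℝ × ℝ)) (c : I → ℝ × ℝ) (ε : I → ℝ)
    (x₀ : ℝ) :
    Prod.mk x₀ ⁻¹' (B \ ⋃ i, vcut B (c i) (ε i)) =
      Prod.mk x₀ ⁻¹' B ∩ ⋂ i ∈ {i | (c i).1 = x₀}, {y | ε i * y < ε i * (c i).2} := by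
  ext y
  simp only [vcut, mem_preimage, Set.mem_sdiff, mem_iUnion, mem_ofPred_eq, not_exists, not_and,
    not_le, mem_inter_iff, mem_iInter]
  exact and_congr_right fun hy =>
    forall_congr' fun i => ⟨fun h hi => h hy hi.symm, fun h _ hi => h hi.symm⟩

theorem ordConnected_setOf_mul_lt (ε k : ℝ) : {y : ℝ | ε * y < k}.OrdConnected :=
  ⟨fun a ha b hb t ht => by
    rcases le_total 0 ε with h | h
    · exact (mul_le_mul_of_nonneg_left ht.2 h).trans_lt hb
    · exact (mul_le_mul_of_nonpos_left ht.1 h).trans_lt ha⟩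

theorem exists_mem_between_of_mem_nhds {α : Type*} [LinearOrder α] [TopologicalSpace α]
    [OrderTopology α] [DenselyOrdered α] [NoMinOrder α] [NoMaxOrder α] {T D U : Set α}
    (hD : D.Finite) (hU : U.Finite) (hT : T.Nonempty) (hTD : ∀ a ∈ D, T ∈ 𝓝 a)
    (hTU : ∀ b ∈ U, T ∈ 𝓝 b) (hDU : ∀ a ∈ D, ∀ b ∈ U, a < b) :
    ∃ t ∈ T, (∀ a ∈ D, a < t) ∧ ∀ b ∈ U, t < b := by
  rcases D.eq_empty_or_nonempty with rfl | hDne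
  · rcases U.eq_empty_or_nonempty with rfl | hUne
    · obtain ⟨t, ht⟩ := hT
      exact ⟨t, ht, by simp, by simp⟩
    · obtain ⟨b, hb, hb_min⟩ := U.exists_min_image id hU hUne
      have : ∀ᶠ t in 𝓝[<] b, t ∈ T ∧ ∀ b' ∈ U, t < b' :=
        (eventually_nhdsWithin_of_eventually_nhds (hTU b hb)).and <|
          hU.eventually_all.2 fun b' hb' =>
            eventually_nhdsWithin_of_forall fun t (ht : t < b) => ht.trans_le (hb_min b' hb')
      obtain ⟨t, ht, htU⟩ := this.exists
      exact ⟨t, ht, by simp, htU⟩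
  · obtain ⟨a, ha, ha_max⟩ := D.exists_max_image id hD hDne
    have : ∀ᶠ t in 𝓝[>] a, t ∈ T ∧ (∀ a' ∈ D, a' < t) ∧ ∀ b ∈ U, t < b :=
      (eventually_nhdsWithin_of_eventually_nhds (hTD a ha)).and <|
        (hD.eventually_all.2 fun a' ha' =>
          eventually_nhdsWithin_of_forall fun t (ht : a < t) => (ha_max a' ha').trans_lt ht).and <|
        hU.eventually_all.2 fun b hb =>
          eventually_nhdsWithin_of_eventually_nhds (eventually_lt_nhds (hDU a ha b hb))
    exact this.exists

theorem nonempty_inter_biInter_setOf_mul_lt {I : Type*} {T : Set ℝ} {F : Set I} (hF : F.Finite)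
    (y ε : I → ℝ) (hT : T.Nonempty) (hε : ∀ i ∈ F, ε i = 1 ∨ ε i = -1)
    (hTy : ∀ i ∈ F, T ∈ 𝓝 (y i)) (hsep : ∀ i ∈ F, ∀ j ∈ F, ε i = -1 → ε j = 1 → y i < y j) :
    (T ∩ ⋂ i ∈ F, {t | ε i * t < ε i * y i}).Nonempty := by
  obtain ⟨t, ht, htD, htU⟩ := exists_mem_between_of_mem_nhds
    (D := y '' (F ∩ {i | ε i = -1})) (U := y '' (F ∩ {i | ε i = 1}))
    ((hF.subset inter_subset_left).image y) ((hF.subset inter_subset_left).image y) hT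
    (forall_mem_image.2 fun i hi => hTy i hi.1) (forall_mem_image.2 fun i hi => hTy i hi.1)
    (forall_mem_image.2 fun i hi => forall_mem_image.2 fun j hj => hsep i hi.1 j hj.1 hi.2 hj.2)
  refine ⟨t, ht, mem_iInter₂.2 fun i hi => ?_⟩
  rcases hε i hi with h | h
  · simpa [h] using htU (y i) ⟨i, ⟨hi, h⟩, rfl⟩
  · simpa [h] using htD (y i) ⟨i, ⟨hi, h⟩, rfl⟩

/-- If every vertical slice of `B` is empty or connected, the points `c i` are pairwise
distinct, lie in the interior of `B`, with finitely many on each vertical line, and the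
signs are nondecreasing along each vertical line, then every vertical slice of
`S_ε = B \ l^ε` over a point of `pr₁(B)` is nonempty and connected. -/
theorem stmt7 {I : Type*} (B : Set (ℝ × ℝ))
    (hslice : ∀ x₀ : ℝ, B ∩ {p : ℝ × ℝ | p.1 = x₀} = ∅ ∨
      IsConnected (B ∩ {p : ℝ × ℝ | p.1 = x₀}))
    (c : I → ℝ × ℝ) (hinj : Function.Injective c) (hc : ∀ i, c i ∈ interior B)
    (hfin : ∀ x₀ : ℝ, {i : I | (c i).1 = x₀}.Finite)
    (ε : I → ℝ) (hε : ∀ i, ε i = 1 ∨ ε i = -1)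
    (hmono : ∀ i j, (c i).1 = (c j).1 → (c j).2 < (c i).2 → ε j ≤ ε i)
    (x₀ : ℝ) (hx : x₀ ∈ Prod.fst '' B) :
    IsConnected ((B \ ⋃ i, vcut B (c i) (ε i)) ∩ {p : ℝ × ℝ | p.1 = x₀}) := by
  have hB : IsConnected (Prod.mk x₀ ⁻¹' B) := by
    obtain ⟨p, hp, rfl⟩ := hx
    rw [← isConnected_inter_fst_iff]
    exact (hslice p.1).resolve_left (nonempty_iff_ne_empty.1 ⟨p, hp, rfl⟩)
  have hnhds : ∀ i ∈ {i | (c i).1 = x₀}, Prod.mk x₀ ⁻¹' B ∈ 𝓝 (c i).2 := fun i hi =>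
    (Continuous.prodMk_right x₀).continuousAt.preimage_mem_nhds <| by
      rw [← hi]; exact mem_interior_iff_mem_nhds.1 (hc i)
  have hsep : ∀ i ∈ {i | (c i).1 = x₀}, ∀ j ∈ {i | (c i).1 = x₀}, ε i = -1 → ε j = 1 →
      (c i).2 < (c j).2 := by
    intro i hi j hj hεi hεj
    have hij : (c i).1 = (c j).1 := hi.trans hj.symm
    refine (not_lt.1 fun h => ?_).lt_of_ne fun h => ?_
    · linarith [hmono i j hij h]
    · cases hinj (Prod.ext hij h); linarith
  rw [isConnected_inter_fst_iff, preimage_mk_diff_iUnion_vcut]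
  refine ⟨nonempty_inter_biInter_setOf_mul_lt (hfin x₀) _ ε hB.nonempty (fun i _ => hε i) hnhds
    hsep, ?_⟩
  rw [isPreconnected_iff_ordConnected]
  exact (isPreconnected_iff_ordConnected.1 hB.isPreconnected).inter
    (ordConnected_biInter fun i _ => ordConnected_setOf_mul_lt _ _)
end

section
/- Let B ⊆ ℝ² be open and connected with every vertical slice B ∩ ({x₀} × ℝ) either empty or connected. Let (c_i)_{i ∈ I} = ((x_i, y_i))_{i ∈ I} be a countable family of pairwise distinct points of B with only finitely many c_i on each vertical line, and such that {x_i : i ∈ I} has no accumulation point in pr₁(B). Let ε = (ε_i)_{i∈I} ∈ {+1,−1}^I and S_ε := B \ ⋃_{i ∈ I} l^{ε_i}(c_i). Then the following are equivalent: (i) S_ε is path-connected; (ii) S_ε is contractible; (iii) for all i, j ∈ I with x_i = x_j and y_i > y_j one has ε_i ≥ ε_j. -/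
/-! The cut complement `S` is open, since near a point of `B` only the finitely many cuts on its
own vertical line matter, and its vertical slices are convex. If two cuts on one vertical line
point towards each other, together they remove that whole slice of `B`, while `S` has points on
both sides of the line; so `S` is disconnected. Otherwise each slice of `B` keeps a point above
all downward cuts and below all upward ones, so `S` has nonempty convex fibres over the interval
`pr₁(B)`. A partition of unity then yields a continuous section, and sliding each point along
its fibre to the section is a homotopy equivalence between `S` and that interval. -/

open Filter

open Topology Set

section ConvexFibres

variable {X E : Type*} [AddCommGroup E] [Module ℝ E] [TopologicalSpace E] [ContinuousAdd E]
  [ContinuousSMul ℝ E]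

theorem IsOpen.exists_continuous_section [PseudoMetricSpace X] {S : Set (X × E)} (hS : IsOpen S)
    (hconv : ∀ x, Convex ℝ {y | (x, y) ∈ S}) :
    ∃ s : C(Prod.fst '' S, E), ∀ x : Prod.fst '' S, ((x : X), s x) ∈ S := by
  refine exists_continuous_forall_mem_convex_of_local_const
    (t := fun x : Prod.fst '' S => {y | ((x : X), y) ∈ S}) (fun x => hconv x) ?_
  rintro ⟨_, p, hp, rfl⟩
  have hopen : IsOpen {x : Prod.fst '' S | ((x : X), p.2) ∈ S} := hS.preimage (by fun_prop)
  exact ⟨p.2, hopen.mem_nhds hp⟩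

/-- The homotopy in `left_inv` moves each point of `S` along the segment in its fibre joining it
to the section. -/
def homotopyEquivFstImageOfSection [TopologicalSpace X] {S : Set (X × E)}
    (hconv : ∀ x, Convex ℝ {y | (x, y) ∈ S}) (s : C(Prod.fst '' S, E))
    (hs : ∀ x : Prod.fst '' S, ((x : X), s x) ∈ S) :
    ContinuousMap.HomotopyEquiv S (Prod.fst '' S) where
  toFun := ⟨fun p => ⟨p.1.1, p.1, p.2, rfl⟩, by fun_prop⟩
  invFun := ⟨fun x => ⟨(x, s x), hs x⟩, by fun_prop⟩
  left_inv := ⟨⟨⟨fun q => ⟨(q.2.1.1, (q.1 : ℝ) • q.2.1.2 +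
        (1 - (q.1 : ℝ)) • s ⟨q.2.1.1, q.2.1, q.2.2, rfl⟩),
      hconv _ q.2.2 (hs ⟨q.2.1.1, q.2.1, q.2.2, rfl⟩) q.1.2.1 (sub_nonneg.2 q.1.2.2)
        (add_sub_cancel _ _)⟩, by fun_prop⟩,
    fun p => by simp, fun p => by simp⟩⟩
  right_inv := ContinuousMap.Homotopic.refl _

theorem IsOpen.contractibleSpace_of_convex_fibres [SeminormedAddCommGroup X] [NormedSpace ℝ X]
    {S : Set (X × E)} (hS : IsOpen S) (hconv : ∀ x, Convex ℝ {y | (x, y) ∈ S})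
    (hbase : Convex ℝ (Prod.fst '' S)) (hne : S.Nonempty) : ContractibleSpace S := by
  obtain ⟨s, hs⟩ := hS.exists_continuous_section hconv
  have := hbase.contractibleSpace (hne.image _)
  exact (homotopyEquivFstImageOfSection hconv s hs).contractibleSpace

end ConvexFibres

theorem IsOpen.exists_mem_between_finite {Y L U : Set ℝ} (hY : IsOpen Y) (hne : Y.Nonempty)
    (hL : L.Finite) (hU : U.Finite) (hLY : L ⊆ Y) (hUY : U ⊆ Y)
    (hLU : ∀ a ∈ L, ∀ b ∈ U, a < b) :
    ∃ y ∈ Y, (∀ a ∈ L, a < y) ∧ ∀ b ∈ U, y < b := by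
  rcases L.eq_empty_or_nonempty with rfl | hLne
  · rcases U.eq_empty_or_nonempty with rfl | hUne
    · obtain ⟨y, hy⟩ := hne
      exact ⟨y, hy, by simp, by simp⟩
    · obtain ⟨b, hb, hb_min⟩ := U.exists_min_image id hU hUne
      have hev : ∀ᶠ y in 𝓝[<] b, y ∈ Y ∧ y < b :=
        Eventually.and (mem_nhdsWithin_of_mem_nhds (hY.mem_nhds (hUY hb))) self_mem_nhdsWithin
      obtain ⟨y, hyY, hyb⟩ := hev.exists
      exact ⟨y, hyY, by simp, fun b' hb' => hyb.trans_le (hb_min b' hb')⟩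
  · obtain ⟨a, ha, ha_max⟩ := L.exists_max_image id hL hLne
    have hev : ∀ᶠ y in 𝓝[>] a, y ∈ Y ∧ a < y ∧ ∀ b ∈ U, y < b :=
      Eventually.and (mem_nhdsWithin_of_mem_nhds (hY.mem_nhds (hLY ha))) <|
        Eventually.and self_mem_nhdsWithin <|
        (hU.eventually_all.2 fun b hb => eventually_lt_nhds (hLU a ha b hb)).filter_mono
          nhdsWithin_le_nhds
    obtain ⟨y, hyY, hay, hyU⟩ := hev.exists
    exact ⟨y, hyY, fun a' ha' => (ha_max a' ha').trans_lt hay, hyU⟩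

def cutComplement {I : Type*} (B : Set (ℝ × ℝ)) (c : I → ℝ × ℝ) (ε : I → ℝ) : Set (ℝ × ℝ) :=
  B \ ⋃ i, vcut B (c i) (ε i)

section CutComplement

variable {I : Type*} {B : Set (ℝ × ℝ)} {c : I → ℝ × ℝ} {ε : I → ℝ}

theorem mem_cutComplement {p : ℝ × ℝ} :
    p ∈ cutComplement B c ε ↔ p ∈ B ∧ ∀ i, p.1 = (c i).1 → ε i * p.2 < ε i * (c i).2 := by
  simp only [cutComplement, vcut, Set.mem_sdiff, mem_iUnion, mem_ofPred_eq, not_exists, not_and,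
    not_le]
  exact and_congr_right fun hp => forall_congr' fun i => ⟨fun h => h hp, fun h _ => h⟩

theorem eventually_fst_eq_of_not_accPt {q : ℝ × ℝ}
    (hq : ¬ AccPt q.1 (𝓟 (range fun i => (c i).1))) :
    ∀ᶠ p in 𝓝 q, ∀ i, p.1 = (c i).1 → p.1 = q.1 := by
  rw [accPt_iff_frequently, not_frequently] at hq
  filter_upwards [(continuous_fst.tendsto q).eventually hq] with p hp i hi
  by_contra hne
  exact hp ⟨hne, i, hi.symm⟩

theorem isOpen_cutComplement (hB : IsOpen B) (hfin : ∀ x₀ : ℝ, {i : I | (c i).1 = x₀}.Finite)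
    (hacc : ∀ x ∈ Prod.fst '' B, ¬ AccPt x (𝓟 (range fun i => (c i).1))) :
    IsOpen (cutComplement B c ε) := by
  refine isOpen_iff_eventually.2 fun q hq => ?_
  rw [mem_cutComplement] at hq
  have hcuts : ∀ᶠ p in 𝓝 q, ∀ i ∈ {i | (c i).1 = q.1}, ε i * p.2 < ε i * (c i).2 :=
    (hfin q.1).eventually_all.2 fun i hi =>
      (isOpen_lt (by fun_prop) continuous_const).mem_nhds (hq.2 i hi.symm)
  filter_upwards [hB.mem_nhds hq.1, eventually_fst_eq_of_not_accPt (hacc q.1 ⟨q, hq.1, rfl⟩),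
    hcuts] with p hpB hfst hp
  exact mem_cutComplement.2 ⟨hpB, fun i hi => hp i (hi.symm.trans (hfst i hi))⟩

theorem ordConnected_slice_of_isPreconnected {x : ℝ} (h : IsPreconnected (B ∩ {p | p.1 = x})) :
    OrdConnected {y | (x, y) ∈ B} := by
  have : {y | (x, y) ∈ B} = Prod.snd '' (B ∩ {p | p.1 = x}) := by
    ext y
    constructor
    · exact fun hy => ⟨(x, y), ⟨hy, rfl⟩, rfl⟩
    · rintro ⟨p, ⟨hp, rfl⟩, rfl⟩
      exact hp
  rw [this]
  exact (h.image _ continuous_snd.continuousOn).ordConnected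

theorem convex_cutComplement_slice {x : ℝ} (hB : OrdConnected {y | (x, y) ∈ B}) :
    Convex ℝ {y | (x, y) ∈ cutComplement B c ε} := by
  have : {y | (x, y) ∈ cutComplement B c ε} =
      {y | (x, y) ∈ B} ∩ ⋂ i, {y | x = (c i).1 → ε i * y < ε i * (c i).2} := by
    ext
    simp [mem_cutComplement]
  rw [this]
  refine hB.convex.inter (convex_iInter fun i => ?_)
  by_cases hx : x = (c i).1
  · simpa [hx] using convex_halfSpace_lt (LinearMap.mulLeft ℝ (ε i)).isLinear ((ε i) * (c i).2)
  · simp [hx, convex_univ]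

theorem fst_ne_of_mem_cutComplement {i j : I} (hx : (c i).1 = (c j).1) (hy : (c j).2 < (c i).2)
    (hi : ε i = -1) (hj : ε j = 1) {p : ℝ × ℝ} (hp : p ∈ cutComplement B c ε) :
    p.1 ≠ (c i).1 := by
  intro hpx
  have h₁ := (mem_cutComplement.1 hp).2 i hpx
  have h₂ := (mem_cutComplement.1 hp).2 j (hpx.trans hx)
  rw [hi] at h₁
  rw [hj] at h₂
  linarith

theorem eventually_nhdsNE_mem_cutComplement (hB : IsOpen B) {q : ℝ × ℝ} (hq : q ∈ B)
    (hacc : ¬ AccPt q.1 (𝓟 (range fun i => (c i).1))) :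
    ∀ᶠ x in 𝓝[≠] q.1, (x, q.2) ∈ cutComplement B c ε := by
  have hline : Tendsto (fun x : ℝ => (x, q.2)) (𝓝 q.1) (𝓝 q) :=
    Continuous.tendsto (by fun_prop) q.1
  filter_upwards [nhdsWithin_le_nhds (hline.eventually (hB.mem_nhds hq)),
    nhdsWithin_le_nhds (hline.eventually (eventually_fst_eq_of_not_accPt hacc)),
    self_mem_nhdsWithin] with x hxB hfst hne
  exact mem_cutComplement.2 ⟨hxB, fun i hi => absurd (hfst i hi) hne⟩

theorem signs_monotone_of_isPreconnected (hB : IsOpen B) (hc : ∀ i, c i ∈ B)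
    (hacc : ∀ x ∈ Prod.fst '' B, ¬ AccPt x (𝓟 (range fun i => (c i).1)))
    (hε : ∀ i, ε i = 1 ∨ ε i = -1) (h : IsPreconnected (cutComplement B c ε)) :
    ∀ i j, (c i).1 = (c j).1 → (c j).2 < (c i).2 → ε j ≤ ε i := by
  intro i j hx hy
  by_contra! hlt
  have hi : ε i = -1 := (hε i).resolve_left fun h1 => by rcases hε j with h | h <;> linarith
  have hj : ε j = 1 := (hε j).resolve_right fun h1 => by rcases hε i with h | h <;> linarith
  have hside := eventually_nhdsNE_mem_cutComplement (ε := ε) hB (hc i) (hacc _ ⟨c i, hc i, rfl⟩)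
  obtain ⟨a, haS, ha⟩ := ((hside.filter_mono (nhdsLT_le_nhdsNE _)).and self_mem_nhdsWithin).exists
  obtain ⟨b, hbS, hb⟩ := ((hside.filter_mono (nhdsGT_le_nhdsNE _)).and self_mem_nhdsWithin).exists
  obtain ⟨p, hp, hpx⟩ := (h.image _ continuous_fst.continuousOn).ordConnected.out
    ⟨_, haS, rfl⟩ ⟨_, hbS, rfl⟩ ⟨le_of_lt ha, le_of_lt hb⟩
  exact fst_ne_of_mem_cutComplement hx hy hi hj hp hpx

theorem exists_mem_cutComplement_slice (hB : IsOpen B) (hinj : Function.Injective c)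
    (hc : ∀ i, c i ∈ B) (hfin : ∀ x₀ : ℝ, {i : I | (c i).1 = x₀}.Finite)
    (hε : ∀ i, ε i = 1 ∨ ε i = -1)
    (hmono : ∀ i j, (c i).1 = (c j).1 → (c j).2 < (c i).2 → ε j ≤ ε i)
    {x : ℝ} (hx : x ∈ Prod.fst '' B) : ∃ y, (x, y) ∈ cutComplement B c ε := by
  obtain ⟨p, hp, rfl⟩ := hx
  set L := (fun i => (c i).2) '' {i | (c i).1 = p.1 ∧ ε i = -1}
  set U := (fun i => (c i).2) '' {i | (c i).1 = p.1 ∧ ε i = 1}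
  have hcB : ∀ i, (c i).1 = p.1 → (c i).2 ∈ {y | (p.1, y) ∈ B} := fun i hi => by
    simpa [← hi] using hc i
  have hLU : ∀ a ∈ L, ∀ b ∈ U, a < b := by
    rintro _ ⟨i, ⟨hix, hi⟩, rfl⟩ _ ⟨j, ⟨hjx, hj⟩, rfl⟩
    by_contra! hji
    rcases hji.lt_or_eq with hlt | heq
    · have := hmono i j (hix.trans hjx.symm) hlt
      rw [hi, hj] at this
      norm_num at this
    · have : j = i := hinj (Prod.ext (hjx.trans hix.symm) heq)
      subst this
      rw [hi] at hj
      norm_num at hj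
  obtain ⟨y, hyB, hyL, hyU⟩ :=
    (hB.preimage (by fun_prop : Continuous fun y : ℝ => (p.1, y))).exists_mem_between_finite
      ⟨p.2, hp⟩ (((hfin p.1).subset fun i hi => hi.1).image _)
      (((hfin p.1).subset fun i hi => hi.1).image _)
      (image_subset_iff.2 fun i hi => hcB i hi.1) (image_subset_iff.2 fun i hi => hcB i hi.1) hLU
  refine ⟨y, mem_cutComplement.2 ⟨hyB, fun i hi => ?_⟩⟩
  rcases hε i with h | h
  · have := hyU _ ⟨i, ⟨hi.symm, h⟩, rfl⟩
    rw [h]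
    linarith
  · have := hyL _ ⟨i, ⟨hi.symm, h⟩, rfl⟩
    rw [h]
    linarith

theorem contractibleSpace_cutComplement (hB : IsOpen B) (hBconn : IsConnected B)
    (hslice : ∀ x, OrdConnected {y | (x, y) ∈ B}) (hinj : Function.Injective c)
    (hc : ∀ i, c i ∈ B) (hfin : ∀ x₀ : ℝ, {i : I | (c i).1 = x₀}.Finite)
    (hacc : ∀ x ∈ Prod.fst '' B, ¬ AccPt x (𝓟 (range fun i => (c i).1)))
    (hε : ∀ i, ε i = 1 ∨ ε i = -1)
    (hmono : ∀ i j, (c i).1 = (c j).1 → (c j).2 < (c i).2 → ε j ≤ ε i) :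
    ContractibleSpace (cutComplement B c ε) := by
  have hfst : Prod.fst '' cutComplement B c ε = Prod.fst '' B := by
    refine (image_mono sdiff_subset).antisymm fun x hx => ?_
    obtain ⟨y, hy⟩ := exists_mem_cutComplement_slice hB hinj hc hfin hε hmono hx
    exact ⟨(x, y), hy, rfl⟩
  refine (isOpen_cutComplement hB hfin hacc).contractibleSpace_of_convex_fibres
    (fun x => convex_cutComplement_slice (hslice x)) ?_ ?_
  · rw [hfst]
    exact (hBconn.isPreconnected.image _ continuous_fst.continuousOn).ordConnected.convex
  · exact (hfst ▸ hBconn.nonempty.image Prod.fst).of_image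

end CutComplement

theorem stmt8_general {I : Type*} (B : Set (ℝ × ℝ)) (hB : IsOpen B)
    (hBconn : IsConnected B)
    (hslice : ∀ x₀ : ℝ, B ∩ {p : ℝ × ℝ | p.1 = x₀} = ∅ ∨
      IsConnected (B ∩ {p : ℝ × ℝ | p.1 = x₀}))
    (c : I → ℝ × ℝ) (hinj : Function.Injective c) (hc : ∀ i, c i ∈ B)
    (hfin : ∀ x₀ : ℝ, {i : I | (c i).1 = x₀}.Finite)
    (hacc : ∀ x ∈ Prod.fst '' B, ¬ AccPt x (𝓟 (Set.range fun i => (c i).1)))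
    (ε : I → ℝ) (hε : ∀ i, ε i = 1 ∨ ε i = -1) :
    List.TFAE [
      IsPathConnected (B \ ⋃ i, vcut B (c i) (ε i)),
      ContractibleSpace ↥(B \ ⋃ i, vcut B (c i) (ε i)),
      ∀ i j, (c i).1 = (c j).1 → (c j).2 < (c i).2 → ε j ≤ ε i] := by
  have hsliceB : ∀ x, OrdConnected {y | (x, y) ∈ B} := fun x =>
    ordConnected_slice_of_isPreconnected <|
      (hslice x).elim (fun h => h ▸ isPreconnected_empty) IsConnected.isPreconnected
  tfae_have 1 → 3 := fun h =>
    signs_monotone_of_isPreconnected hB hc hacc hε h.isConnected.isPreconnected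
  tfae_have 3 → 2 := contractibleSpace_cutComplement hB hBconn hsliceB hinj hc hfin hacc hε
  tfae_have 2 → 1 := fun _ => isPathConnected_iff_pathConnectedSpace.2 inferInstance
  tfae_finish

/-- For `B ⊆ ℝ²` open and connected with every vertical slice empty or connected, and
countably many pairwise distinct points `c i` of `B` with finitely many on each
vertical line and whose first coordinates have no accumulation point in `pr₁(B)`,
the following are equivalent for a choice of signs `ε`: the cut complement `S_ε` is
path-connected; `S_ε` is contractible; the signs are nondecreasing along each vertical
line. -/
theorem stmt8 {I : Type*} [Countable I] (B : Set (ℝ × ℝ)) (hB : IsOpen B)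
    (hBconn : IsConnected B)
    (hslice : ∀ x₀ : ℝ, B ∩ {p : ℝ × ℝ | p.1 = x₀} = ∅ ∨
      IsConnected (B ∩ {p : ℝ × ℝ | p.1 = x₀}))
    (c : I → ℝ × ℝ) (hinj : Function.Injective c) (hc : ∀ i, c i ∈ B)
    (hfin : ∀ x₀ : ℝ, {i : I | (c i).1 = x₀}.Finite)
    (hacc : ∀ x ∈ Prod.fst '' B, ¬ AccPt x (𝓟 (Set.range fun i => (c i).1)))
    (ε : I → ℝ) (hε : ∀ i, ε i = 1 ∨ ε i = -1) :
    List.TFAE [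
      IsPathConnected (B \ ⋃ i, vcut B (c i) (ε i)),
      ContractibleSpace ↥(B \ ⋃ i, vcut B (c i) (ε i)),
      ∀ i j, (c i).1 = (c j).1 → (c j).2 < (c i).2 → ε j ≤ ε i] :=
  stmt8_general B hB hBconn hslice c hinj hc hfin hacc ε hε
end

section
/- Let (x_i)_{i ≥ 1} be a nondecreasing sequence of real numbers and (k_i)_{i ≥ 1} a sequence of integers. For each i, define 𝔩_i : ℝ² → ℝ² by 𝔩_i(x, y) = (x, y + k_i · max(x − x_i, 0)), let D := {(x, y) ∈ ℝ² : ∃ i, x ≤ x_i} with the subspace topology, and let 𝔩 : D → D be the well-defined map with 𝔩(x, y) = (𝔩_i ∘ ⋯ ∘ 𝔩_1)(x, y) whenever x ≤ x_i. Then 𝔩 is a homeomorphism of D onto D, and on each connected component of D \ ⋃_i ({x_i} × ℝ) it agrees with a map of the form (x, y) ↦ (x, y + m·x + c) for some m ∈ ℤ and c ∈ ℝ (in particular, with an affine transformation of ℝ² whose linear part lies in GL(2, ℤ)). -/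
/-- The piecewise integral-affine shear `𝔩_i`: the identity on the half-plane
`{x < xᵢ}` and the shear `(x, y) ↦ (x, y + kᵢ(x − xᵢ))` on `{x ≥ xᵢ}`. -/
def shearAt (x₀ : ℝ) (k : ℤ) : ℝ × ℝ → ℝ × ℝ :=
  fun p => (p.1, p.2 + (k : ℝ) * max (p.1 - x₀) 0)

/-- The partial composition `𝔩_i ∘ 𝔩_{i−1} ∘ ⋯ ∘ 𝔩_0` (indices `0`-based). -/
def partialComp (x : ℕ → ℝ) (k : ℕ → ℤ) : ℕ → (ℝ × ℝ → ℝ × ℝ)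
  | 0 => shearAt (x 0) (k 0)
  | n + 1 => shearAt (x (n + 1)) (k (n + 1)) ∘ partialComp x k n

/-- The natural domain `D = {(x, y) ∈ ℝ² : ∃ i, x ≤ xᵢ}`. -/
def domD (x : ℕ → ℝ) : Set (ℝ × ℝ) := {p : ℝ × ℝ | ∃ i, p.1 ≤ x i}

/-- The total shear amount after `i+1` shears. -/
noncomputable def gfun (x : ℕ → ℝ) (k : ℕ → ℤ) (i : ℕ) (t : ℝ) : ℝ :=
  ∑ j ∈ Finset.range (i + 1), (k j : ℝ) * max (t - x j) 0

lemma gfun_continuous (x : ℕ → ℝ) (k : ℕ → ℤ) (i : ℕ) : Continuous (gfun x k i) := by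
  apply continuous_finset_sum
  intro j _
  exact continuous_const.mul ((continuous_id.sub continuous_const).max continuous_const)

lemma partialComp_eq (x : ℕ → ℝ) (k : ℕ → ℤ) :
    ∀ (i : ℕ) (p : ℝ × ℝ), partialComp x k i p = (p.1, p.2 + gfun x k i p.1) := by
  intro i
  induction i with
  | zero =>
    intro p
    simp [partialComp, shearAt, gfun]
  | succ n ih =>
    intro p
    simp only [partialComp, Function.comp_apply, ih, shearAt, gfun, Finset.sum_range_succ]
    simp [gfun]
    ring

lemma gfun_stab (x : ℕ → ℝ) (hx : Monotone x) (k : ℕ → ℤ) {i n : ℕ} {t : ℝ}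
    (ht : t ≤ x i) (hin : i ≤ n) : gfun x k n t = gfun x k i t := by
  unfold gfun
  refine (Finset.sum_subset ?_ ?_).symm
  · exact Finset.range_subset_range.mpr (by omega)
  · intro j hj hji
    simp only [Finset.mem_range] at hj hji
    have : i ≤ j := by omega
    have : t ≤ x j := ht.trans (hx this)
    simp [max_eq_right (by linarith : t - x j ≤ 0)]

lemma gfun_agree (x : ℕ → ℝ) (hx : Monotone x) (k : ℕ → ℤ) {i j : ℕ} {t : ℝ}
    (hi : t ≤ x i) (hj : t ≤ x j) : gfun x k i t = gfun x k j t := by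
  rw [← gfun_stab x hx k hi (le_max_left i j), ← gfun_stab x hx k hj (le_max_right i j)]

open Classical in
/-- The infinite-composition shear amount. -/
noncomputable def Phi (x : ℕ → ℝ) (k : ℕ → ℤ) (t : ℝ) : ℝ :=
  if h : ∃ i, t ≤ x i then gfun x k h.choose t else 0

lemma Phi_eq (x : ℕ → ℝ) (hx : Monotone x) (k : ℕ → ℤ) {i : ℕ} {t : ℝ} (ht : t ≤ x i) :
    Phi x k t = gfun x k i t := by
  have h : ∃ i, t ≤ x i := ⟨i, ht⟩
  rw [Phi]
  rw [dif_pos h]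
  exact gfun_agree x hx k h.choose_spec ht

lemma Phi_contOn (x : ℕ → ℝ) (hx : Monotone x) (k : ℕ → ℤ) :
    ContinuousOn (Phi x k) {t : ℝ | ∃ i, t ≤ x i} := by
  intro t₀ ht₀
  by_cases hj : ∃ j, t₀ < x j
  · obtain ⟨j, hj⟩ := hj
    apply ContinuousAt.continuousWithinAt
    have hev : Phi x k =ᶠ[nhds t₀] gfun x k j := by
      filter_upwards [isOpen_Iio.mem_nhds (show t₀ ∈ Set.Iio (x j) from hj)] with t ht
      exact Phi_eq x hx k (le_of_lt ht)
    exact ((gfun_continuous x k j).continuousAt).congr hev.symm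
  · push_neg at hj
    obtain ⟨i, hi⟩ := ht₀
    have heq : ∀ t ∈ {t : ℝ | ∃ n, t ≤ x n}, Phi x k t = gfun x k i t := by
      rintro t ⟨n, hn⟩
      exact Phi_eq x hx k (hn.trans ((hj n).trans hi))
    exact ((gfun_continuous x k i).continuousAt).continuousWithinAt.congr heq
      (heq t₀ ⟨i, hi⟩)

/-- If `L` is the well-defined infinite composition of the shears `𝔩_i` (i.e. agrees
with the partial composition `𝔩_i ∘ ⋯ ∘ 𝔩_0` on each slab `{x ≤ xᵢ}`), then `L`
restricts to a homeomorphism of `D` onto `D`, and on each connected component of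
`D \ ⋃ᵢ ({xᵢ} × ℝ)` it agrees with a map of the form `(x, y) ↦ (x, y + m·x + c)` with
`m ∈ ℤ` and `c ∈ ℝ`. -/
theorem stmt11 (x : ℕ → ℝ) (hx : Monotone x) (k : ℕ → ℤ)
    (L : ℝ × ℝ → ℝ × ℝ)
    (hL : ∀ (i : ℕ) (p : ℝ × ℝ), p.1 ≤ x i → L p = partialComp x k i p) :
    (∃ h : ↥(domD x) ≃ₜ ↥(domD x), ∀ p : ↥(domD x), (h p : ℝ × ℝ) = L p) ∧
    (∀ p ∈ domD x \ ⋃ i, {q : ℝ × ℝ | q.1 = x i}, ∃ (m : ℤ) (c : ℝ),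
      ∀ q ∈ connectedComponentIn (domD x \ ⋃ i, {q : ℝ × ℝ | q.1 = x i}) p,
        L q = (q.1, q.2 + (m : ℝ) * q.1 + c)) := by
  have hLD : ∀ p ∈ domD x, L p = (p.1, p.2 + Phi x k p.1) := by
    rintro p ⟨i, hi⟩
    rw [hL i p hi, partialComp_eq, Phi_eq x hx k hi]
  constructor
  · -- the homeomorphism
    have hcontPhi : Continuous fun p : ↥(domD x) => Phi x k (p : ℝ × ℝ).1 := by
      have hr : Continuous fun p : ↥(domD x) =>
          (⟨(p : ℝ × ℝ).1, p.2⟩ : {t : ℝ | ∃ i, t ≤ x i}) :=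
        Continuous.subtype_mk (continuous_fst.comp continuous_subtype_val) _
      exact (continuousOn_iff_continuous_restrict.mp (Phi_contOn x hx k)).comp hr
    refine ⟨{
      toFun := fun p => ⟨((p : ℝ × ℝ).1, (p : ℝ × ℝ).2 + Phi x k (p : ℝ × ℝ).1), p.2⟩
      invFun := fun p => ⟨((p : ℝ × ℝ).1, (p : ℝ × ℝ).2 - Phi x k (p : ℝ × ℝ).1), p.2⟩
      left_inv := fun p => Subtype.ext (Prod.ext rfl (by simp))
      right_inv := fun p => Subtype.ext (Prod.ext rfl (by simp))
      continuous_toFun := Continuous.subtype_mk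
        ((continuous_fst.comp continuous_subtype_val).prodMk
          (((continuous_snd.comp continuous_subtype_val)).add hcontPhi)) _
      continuous_invFun := Continuous.subtype_mk
        ((continuous_fst.comp continuous_subtype_val).prodMk
          (((continuous_snd.comp continuous_subtype_val)).sub hcontPhi)) _
    }, ?_⟩
    intro p
    rw [hLD p p.2]
    rfl
  · -- the affine description on components
    set S := domD x \ ⋃ i, {q : ℝ × ℝ | q.1 = x i} with hS
    rintro p hp
    obtain ⟨⟨i, hpi⟩, hp2⟩ := hp
    have hpne : ∀ j, p.1 ≠ x j := by
      intro j hj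
      exact hp2 (Set.mem_iUnion.mpr ⟨j, hj⟩)
    have hplt : p.1 < x i := lt_of_le_of_ne hpi (hpne i)
    set T := connectedComponentIn S p with hT
    have hTS : T ⊆ S := connectedComponentIn_subset S p
    have hTpre : IsPreconnected T := (isPreconnected_connectedComponentIn)
    have himg : IsPreconnected (Prod.fst '' T) :=
      hTpre.image _ continuous_fst.continuousOn
    have hord : (Prod.fst '' T).OrdConnected := himg.ordConnected
    have hpT : p ∈ T := mem_connectedComponentIn (by exact ⟨⟨i, hpi⟩, hp2⟩)
    -- key: x j never lies between p.1 and q.1 for q ∈ T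
    have hkey : ∀ q ∈ T, ∀ j, x j ∉ Set.uIcc p.1 q.1 := by
      intro q hq j hmem
      have h1 : p.1 ∈ Prod.fst '' T := ⟨p, hpT, rfl⟩
      have h2 : q.1 ∈ Prod.fst '' T := ⟨q, hq, rfl⟩
      have := hord.uIcc_subset h1 h2 hmem
      obtain ⟨r, hrT, hr1⟩ := this
      exact (hTS hrT).2 (Set.mem_iUnion.mpr ⟨j, hr1⟩)
    refine ⟨∑ j ∈ Finset.range (i + 1), if x j < p.1 then k j else 0,
      ∑ j ∈ Finset.range (i + 1), if x j < p.1 then -((k j : ℝ) * x j) else 0, ?_⟩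
    intro q hq
    have hqne : ∀ j, q.1 ≠ x j := by
      intro j hj
      exact (hTS hq).2 (Set.mem_iUnion.mpr ⟨j, hj⟩)
    have hside : ∀ j, (x j < p.1 ∧ x j < q.1) ∨ (p.1 < x j ∧ q.1 < x j) := by
      intro j
      have hnm := hkey q hq j
      rw [Set.mem_uIcc] at hnm
      rcases (hpne j).lt_or_gt with h | h
      · right
        refine ⟨h, ?_⟩
        rcases (hqne j).lt_or_gt with h' | h'
        · exact h'
        · exfalso; exact hnm (Or.inl ⟨le_of_lt h, le_of_lt h'⟩)
      · left
        refine ⟨h, ?_⟩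
        rcases (hqne j).lt_or_gt with h' | h'
        · exfalso; exact hnm (Or.inr ⟨le_of_lt h', le_of_lt h⟩)
        · exact h'
    have hqi : q.1 ≤ x i := by
      rcases hside i with ⟨h, _⟩ | ⟨_, h⟩
      · exact absurd h (not_lt.mpr hpi)
      · exact le_of_lt h
    rw [hL i q hqi, partialComp_eq]
    refine Prod.ext rfl ?_
    show q.2 + gfun x k i q.1 = q.2 + _ * q.1 + _
    have : gfun x k i q.1 =
        (↑(∑ j ∈ Finset.range (i + 1), if x j < p.1 then k j else 0) : ℝ) * q.1 +
        ∑ j ∈ Finset.range (i + 1), if x j < p.1 then -((k j : ℝ) * x j) else 0 := by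
      push_cast
      rw [Finset.sum_mul, ← Finset.sum_add_distrib]
      unfold gfun
      apply Finset.sum_congr rfl
      intro j _
      by_cases hj : x j < p.1
      · have hqj : x j < q.1 := by
          rcases hside j with ⟨_, h⟩ | ⟨h, _⟩
          · exact h
          · exact absurd hj (not_lt.mpr (le_of_lt h))
        rw [if_pos hj, if_pos hj, max_eq_left (by linarith : (0:ℝ) ≤ q.1 - x j)]
        ring
      · have : q.1 < x j := by
          rcases hside j with ⟨h, _⟩ | ⟨_, h⟩
          · exact absurd h hj
          · exact h
        rw [if_neg hj, if_neg hj, max_eq_right (by linarith : q.1 - x j ≤ 0)]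
        ring
    rw [this]
    ring
end

section
/- Let B ⊆ ℝ² be such that every vertical slice B ∩ ({x₀} × ℝ) is either empty or connected. Let (c_i)_{i ∈ I} = ((x_i, y_i))_{i ∈ I} be a countable family of pairwise distinct points of the interior Int(B) with only finitely many c_i on each vertical line, and let ε = (ε_i)_{i∈I} ∈ {+1,−1}^I. Then there exists a unique ε̂ = (ε̂_i)_{i∈I} ∈ {+1,−1}^I such that: (a) S_ε ⊆ S_ε̂; (b) j_ε(x, y) = j_ε̂(x, y) for every (x, y) ∈ B with (x, y) ≠ c_i for all i; and (c) for all i, j ∈ I with x_i = x_j and y_i > y_j, one has ε̂_i ≥ ε̂_j. -/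
lemma my_card_rank_lt {I : Type*} (s : Finset I) (y : I → ℝ) (hy : Set.InjOn y ↑s)
    {k : ℕ} (hk : k ≤ s.card) :
    (s.filter fun i => (s.filter fun j => y j < y i).card < k).card = k := by
  classical
  set r : I → ℕ := fun i => (s.filter fun j => y j < y i).card with hr
  have hmono : ∀ i ∈ s, ∀ j ∈ s, y i < y j → r i < r j := by
    intro i hi j hj hij
    apply Finset.card_lt_card
    rw [Finset.ssubset_iff_of_subset (by
      intro a ha
      rw [Finset.mem_filter] at ha ⊢
      exact ⟨ha.1, lt_trans ha.2 hij⟩)]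
    exact ⟨i, by simp [hi, hij], by simp⟩
  have hinj : Set.InjOn r ↑s := by
    intro a ha b hb hab
    by_contra hne
    have hyne : y a ≠ y b := fun h => hne (hy ha hb h)
    rcases hyne.lt_or_gt with h | h
    · exact absurd hab (Nat.ne_of_lt (hmono a ha b hb h))
    · exact absurd hab.symm (Nat.ne_of_lt (hmono b hb a ha h))
  have hlt : ∀ i ∈ s, r i < s.card := by
    intro i hi
    calc r i ≤ (s.erase i).card := Finset.card_le_card (by
          intro j hj
          rw [Finset.mem_filter] at hj
          exact Finset.mem_erase.2 ⟨fun h => absurd hj.2 (by rw [h]; exact lt_irrefl _), hj.1⟩)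
    _ < s.card := Finset.card_erase_lt_of_mem hi
  have himg : s.image r = Finset.range s.card := by
    apply Finset.eq_of_subset_of_card_le
    · intro m hm
      obtain ⟨i, hi, rfl⟩ := Finset.mem_image.1 hm
      exact Finset.mem_range.2 (hlt i hi)
    · rw [Finset.card_image_of_injOn hinj, Finset.card_range]
  have h2 : (s.filter fun i => r i < k).card = ((s.image r).filter fun m => m < k).card := by
    rw [Finset.filter_image, Finset.card_image_of_injOn (hinj.mono (by
      intro a ha; exact Finset.mem_coe.2 (Finset.mem_of_mem_filter a (Finset.mem_coe.1 ha))))]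
  rw [h2, himg]
  have : (Finset.range s.card).filter (fun m => m < k) = Finset.range (min k s.card) := by
    ext m; simp; omega
  rw [this, Finset.card_range]
  omega

lemma my_sum_sign {I : Type*} (s : Finset I) (y : I → ℝ) (t : ℝ) (η : I → ℝ)
    (hη : ∀ i ∈ s, η i = 1 ∨ η i = -1) (ht : ∀ i ∈ s, y i ≠ t) :
    ∑ i ∈ s.filter (fun i => η i * y i ≤ η i * t), η i
      = ((s.filter fun i => y i < t).card : ℝ) - ((s.filter fun i => η i = -1).card : ℝ) := by
  classical
  induction s using Finset.induction_on with
  | empty => simp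
  | @insert a s ha ih =>
    have hη' : ∀ i ∈ s, η i = 1 ∨ η i = -1 := fun i hi => hη i (Finset.mem_insert_of_mem hi)
    have ht' : ∀ i ∈ s, y i ≠ t := fun i hi => ht i (Finset.mem_insert_of_mem hi)
    have hrec := ih hη' ht'
    have hna : ∀ (p : I → Prop) [DecidablePred p], a ∉ s.filter p :=
      fun p _ h => ha (Finset.mem_of_mem_filter a h)
    rw [Finset.filter_insert, Finset.filter_insert, Finset.filter_insert]
    rcases hη a (Finset.mem_insert_self a s) with h1 | h1 <;>
      rcases (ht a (Finset.mem_insert_self a s)).lt_or_gt with h2 | h2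
    · rw [if_pos (show η a * y a ≤ η a * t by rw [h1]; linarith),
        if_pos h2, if_neg (show ¬ η a = -1 by rw [h1]; norm_num),
        Finset.sum_insert (hna _), Finset.card_insert_of_notMem (hna _)]
      push_cast; rw [hrec, h1]; ring
    · rw [if_neg (show ¬ η a * y a ≤ η a * t by rw [h1]; simp; linarith),
        if_neg (by linarith), if_neg (show ¬ η a = -1 by rw [h1]; norm_num)]
      exact hrec
    · rw [if_neg (show ¬ η a * y a ≤ η a * t by rw [h1]; simp; linarith),
        if_pos h2, if_pos h1, Finset.card_insert_of_notMem (hna _),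
        Finset.card_insert_of_notMem (hna _)]
      push_cast; rw [hrec]; ring
    · rw [if_pos (show η a * y a ≤ η a * t by rw [h1]; simp; linarith),
        if_neg (by linarith), if_pos h1,
        Finset.sum_insert (hna _), Finset.card_insert_of_notMem (hna _)]
      push_cast; rw [hrec, h1]; ring



/-- The cut-counting function `j_ε(p) = Σ_{i : p ∈ l^{εᵢ}(cᵢ)} εᵢ` (a finite sum when
each vertical line contains only finitely many of the `cᵢ`). -/
noncomputable def jfun {I : Type*} (B : Set (ℝ × ℝ)) (c : I → ℝ × ℝ) (ε : I → ℝ)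
    (p : ℝ × ℝ) : ℝ :=
  ∑ᶠ i ∈ {i : I | p ∈ vcut B (c i) (ε i)}, ε i

/-- Given countably many pairwise distinct points `cᵢ` of the interior of `B` with
finitely many on each vertical line, and a choice of signs `ε`, there is a unique
choice of signs `ε̂` such that `S_ε ⊆ S_ε̂`, the cut-counting functions of `ε` and `ε̂`
agree on `B` away from the points `cᵢ`, and the signs `ε̂` are nondecreasing along
every vertical line. -/
theorem stmt12 {I : Type*} [Countable I] (B : Set (ℝ × ℝ))
    (hslice : ∀ x₀ : ℝ, B ∩ {p : ℝ × ℝ | p.1 = x₀} = ∅ ∨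
      IsConnected (B ∩ {p : ℝ × ℝ | p.1 = x₀}))
    (c : I → ℝ × ℝ) (hinj : Function.Injective c) (hc : ∀ i, c i ∈ interior B)
    (hfin : ∀ x₀ : ℝ, {i : I | (c i).1 = x₀}.Finite)
    (ε : I → ℝ) (hε : ∀ i, ε i = 1 ∨ ε i = -1) :
    ∃! ε' : I → ℝ, (∀ i, ε' i = 1 ∨ ε' i = -1) ∧
      (B \ ⋃ i, vcut B (c i) (ε i)) ⊆ (B \ ⋃ i, vcut B (c i) (ε' i)) ∧
      (∀ p ∈ B, (∀ i, p ≠ c i) → jfun B c ε p = jfun B c ε' p) ∧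
      (∀ i j, (c i).1 = (c j).1 → (c j).2 < (c i).2 → ε' j ≤ ε' i) := by
  classical
  set F : ℝ → Finset I := fun x => (hfin x).toFinset with hF
  have hmemF : ∀ (x : ℝ) (i : I), i ∈ F x ↔ (c i).1 = x := by
    intro x i; exact (hfin x).mem_toFinset
  have hinjy : ∀ x : ℝ, Set.InjOn (fun i => (c i).2) ↑(F x) := by
    intro x i hi j hj hij
    apply hinj
    have hi' := (hmemF x i).1 (Finset.mem_coe.1 hi)
    have hj' := (hmemF x j).1 (Finset.mem_coe.1 hj)
    exact Prod.ext (hi'.trans hj'.symm) hij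
  set k : ℝ → ℕ := fun x => ((F x).filter fun i => ε i = -1).card with hk
  set rk : I → ℕ := fun i => ((F (c i).1).filter fun j => (c j).2 < (c i).2).card with hrk
  set ε' : I → ℝ := fun i => if rk i < k (c i).1 then (-1 : ℝ) else 1 with hε'
  have hsign : ∀ i, ε' i = 1 ∨ ε' i = -1 := by
    intro i; by_cases h : rk i < k (c i).1
    · right; simp [hε', h]
    · left; simp [hε', h]
  have hneg : ∀ i, (ε' i = -1 ↔ rk i < k (c i).1) := by
    intro i; by_cases h : rk i < k (c i).1 <;> simp [hε', h] <;> norm_num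
  have hkle : ∀ x, k x ≤ (F x).card := fun x => Finset.card_filter_le _ _
  have hrkx : ∀ (x : ℝ), ∀ i ∈ F x,
      rk i = ((F x).filter fun j => (c j).2 < (c i).2).card := by
    intro x i hi
    have hx := (hmemF x i).1 hi
    simp only [hrk, hx]
  have hcount : ∀ x, ((F x).filter fun i => ε' i = -1).card = k x := by
    intro x
    have he : ((F x).filter fun i => ε' i = -1)
        = ((F x).filter fun i => ((F x).filter fun j => (c j).2 < (c i).2).card < k x) := by
      apply Finset.filter_congr
      intro i hi
      have hx := (hmemF x i).1 hi
      rw [hneg i, hrkx x i hi, hx]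
    rw [he, my_card_rank_lt (F x) (fun i => (c i).2) (hinjy x) (hkle x)]
  have hjeq : ∀ (η : I → ℝ), (∀ i, η i = 1 ∨ η i = -1) → ∀ p ∈ B, (∀ i, p ≠ c i) →
      jfun B c η p = (((F p.1).filter fun i => (c i).2 < p.2).card : ℝ)
        - (((F p.1).filter fun i => η i = -1).card : ℝ) := by
    intro η hη p hp hpne
    have hset : {i : I | p ∈ vcut B (c i) (η i)}
        = ↑((F p.1).filter fun i => η i * (c i).2 ≤ η i * p.2) := by
      ext i
      simp only [Set.mem_setOf_eq, vcut, Finset.coe_filter, hmemF]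
      constructor
      · rintro ⟨-, h1, h2⟩; exact ⟨h1.symm, h2⟩
      · rintro ⟨h1, h2⟩; exact ⟨hp, h1.symm, h2⟩
    rw [jfun, hset, finsum_mem_coe_finset]
    apply my_sum_sign
    · intro i _; exact hη i
    · intro i hi hcontra
      exact hpne i (Prod.ext ((hmemF p.1 i).1 hi).symm hcontra.symm)
  have hgoodpt : ∀ i : I, ∃ p : ℝ × ℝ, p ∈ B ∧ p.1 = (c i).1 ∧ (∀ j, p ≠ c j) := by
    intro i
    obtain ⟨δ, hδ, hball⟩ : ∃ δ > 0, Metric.ball (c i) δ ⊆ B := by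
      obtain ⟨δ, hδ, h⟩ := Metric.isOpen_iff.1 isOpen_interior (c i) (hc i)
      exact ⟨δ, hδ, h.trans interior_subset⟩
    have hIoo : (Set.Ioo ((c i).2) ((c i).2 + δ)).Infinite :=
      Set.Ioo_infinite (by linarith)
    obtain ⟨t, htmem, htne⟩ :=
      (hIoo.diff (((F (c i).1).image fun j => (c j).2).finite_toSet)).nonempty
    rw [Set.mem_Ioo] at htmem
    refine ⟨((c i).1, t), ?_, rfl, ?_⟩
    · apply hball
      rw [Metric.mem_ball, Prod.dist_eq]
      apply max_lt
      · simpa using hδ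
      · rw [Real.dist_eq, abs_lt]
        constructor <;> simp <;> linarith
    · intro j hpc
      by_cases hj : (c j).1 = (c i).1
      · apply htne
        have ht2 : (c j).2 = t := by rw [← hpc]
        exact Finset.mem_coe.2 (Finset.mem_image.2 ⟨j, (hmemF _ j).2 hj, ht2⟩)
      · exact hj (by rw [← hpc])
  refine ⟨ε', ⟨hsign, ?_, ?_, ?_⟩, ?_⟩
  · -- (a)
    rintro p ⟨hpB, hpn⟩
    refine ⟨hpB, fun hmem => hpn ?_⟩
    obtain ⟨i, hi⟩ := Set.mem_iUnion.1 hmem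
    obtain ⟨-, hpx, hpcond⟩ := hi
    have hiF : i ∈ F (c i).1 := (hmemF _ i).2 rfl
    have erk : ((F (c i).1).filter fun j => (c j).2 < (c i).2).card = rk i := rfl
    have ek : ((F (c i).1).filter fun j => ε j = -1).card = k (c i).1 := rfl
    by_cases hcase : rk i < k (c i).1
    · have hval : ε' i = -1 := (hneg i).2 hcase
      have hpy : p.2 ≤ (c i).2 := by
        rw [hval] at hpcond; linarith
      have hex : ∃ j ∈ F (c i).1, ε j = -1 ∧ (c i).2 ≤ (c j).2 := by
        by_contra hcon
        push_neg at hcon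
        have hsub : ((F (c i).1).filter fun j => ε j = -1)
            ⊆ ((F (c i).1).filter fun j => (c j).2 < (c i).2) := by
          intro j hj
          rw [Finset.mem_filter] at hj ⊢
          exact ⟨hj.1, hcon j hj.1 hj.2⟩
        have hcard := Finset.card_le_card hsub
        omega
      obtain ⟨j, hjF, hjε, hjy⟩ := hex
      refine Set.mem_iUnion.2 ⟨j, hpB, ?_, ?_⟩
      · rw [hpx]; exact ((hmemF _ j).1 hjF).symm
      · rw [hjε]; linarith
    · have hval : ε' i = 1 := by
        rcases hsign i with h | h
        · exact h
        · exact absurd ((hneg i).1 h) hcase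
      have hpy : (c i).2 ≤ p.2 := by
        rw [hval] at hpcond; linarith
      have hex : ∃ j ∈ F (c i).1, ε j = 1 ∧ (c j).2 ≤ (c i).2 := by
        by_contra hcon
        push_neg at hcon
        have hsub : insert i ((F (c i).1).filter fun j => (c j).2 < (c i).2)
            ⊆ ((F (c i).1).filter fun j => ε j = -1) := by
          intro a ha
          rcases Finset.mem_insert.1 ha with rfl | ha
          · refine Finset.mem_filter.2 ⟨hiF, ?_⟩
            rcases hε a with h | h
            · exact absurd (hcon a hiF h) (lt_irrefl _)
            · exact h
          · rw [Finset.mem_filter] at ha ⊢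
            refine ⟨ha.1, ?_⟩
            rcases hε a with h | h
            · exact absurd (hcon a ha.1 h) (lt_asymm ha.2)
            · exact h
        have hcard := Finset.card_le_card hsub
        have hnm : i ∉ (F (c i).1).filter fun j => (c j).2 < (c i).2 :=
          fun h => absurd (Finset.mem_filter.1 h).2 (lt_irrefl _)
        rw [Finset.card_insert_of_notMem hnm] at hcard
        omega
      obtain ⟨j, hjF, hjε, hjy⟩ := hex
      refine Set.mem_iUnion.2 ⟨j, hpB, ?_, ?_⟩
      · rw [hpx]; exact ((hmemF _ j).1 hjF).symm
      · rw [hjε]; linarith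
  · -- (b)
    intro p hp hpne
    rw [hjeq ε hε p hp hpne, hjeq ε' hsign p hp hpne, hcount p.1]
  · -- (c)
    intro i j hx hy
    have hiF : i ∈ F (c i).1 := (hmemF _ i).2 rfl
    have hjF : j ∈ F (c i).1 := (hmemF _ j).2 hx.symm
    have hsub : insert j ((F (c i).1).filter fun l => (c l).2 < (c j).2)
        ⊆ (F (c i).1).filter fun l => (c l).2 < (c i).2 := by
      intro a ha
      rcases Finset.mem_insert.1 ha with rfl | ha
      · exact Finset.mem_filter.2 ⟨hjF, hy⟩
      · rw [Finset.mem_filter] at ha ⊢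
        exact ⟨ha.1, ha.2.trans hy⟩
    have hcard := Finset.card_le_card hsub
    have hnm : j ∉ (F (c i).1).filter fun l => (c l).2 < (c j).2 :=
      fun h => absurd (Finset.mem_filter.1 h).2 (lt_irrefl _)
    rw [Finset.card_insert_of_notMem hnm] at hcard
    have h1 : rk j = ((F (c i).1).filter fun l => (c l).2 < (c j).2).card :=
      hrkx (c i).1 j hjF
    have h2 : rk i = ((F (c i).1).filter fun l => (c l).2 < (c i).2).card := rfl
    have hrkij : rk j < rk i := by omega
    have hkk : k (c j).1 = k (c i).1 := by rw [hx]
    simp only [hε', hkk]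
    split_ifs with ha hb hb
    · exact le_refl _
    · norm_num
    · exact absurd hb (by omega)
    · exact le_refl _
  · -- uniqueness
    intro ε'' ⟨h1, _h2, h3, h4⟩
    funext i
    obtain ⟨p, hpB, hpx, hpne⟩ := hgoodpt i
    have heq := h3 p hpB hpne
    rw [hjeq ε hε p hpB hpne, hjeq ε'' h1 p hpB hpne] at heq
    have hkcast : (((F p.1).filter fun j => ε j = -1).card : ℝ)
        = (((F p.1).filter fun j => ε'' j = -1).card : ℝ) := by linarith
    have hk'' : ((F (c i).1).filter fun j => ε'' j = -1).card = k (c i).1 := by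
      have := Nat.cast_inj.mp hkcast
      rw [hpx] at this
      exact this.symm
    have erk : ((F (c i).1).filter fun j => (c j).2 < (c i).2).card = rk i := rfl
    by_cases hcase : rk i < k (c i).1
    · have hval : ε' i = -1 := (hneg i).2 hcase
      rw [hval]
      rcases h1 i with he | he
      · exfalso
        have hsub : ((F (c i).1).filter fun j => ε'' j = -1)
            ⊆ ((F (c i).1).filter fun j => (c j).2 < (c i).2) := by
          intro a ha
          rw [Finset.mem_filter] at ha ⊢
          refine ⟨ha.1, ?_⟩
          by_contra hge
          push_neg at hge
          have hne : (c a).2 ≠ (c i).2 := by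
            intro hya
            have hai : a = i := hinj (Prod.ext ((hmemF _ a).1 ha.1) hya)
            rw [hai] at ha
            rw [ha.2] at he
            norm_num at he
          have hlt : (c i).2 < (c a).2 := lt_of_le_of_ne hge (Ne.symm hne)
          have hmn := h4 a i ((hmemF _ a).1 ha.1) hlt
          rw [he, ha.2] at hmn
          norm_num at hmn
        have hcard := Finset.card_le_card hsub
        omega
      · exact he
    · have hval : ε' i = 1 := by
        rcases hsign i with h | h
        · exact h
        · exact absurd ((hneg i).1 h) hcase
      rw [hval]
      rcases h1 i with he | he
      · exact he
      · exfalso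
        have hsub : insert i ((F (c i).1).filter fun j => (c j).2 < (c i).2)
            ⊆ ((F (c i).1).filter fun j => ε'' j = -1) := by
          intro a ha
          rcases Finset.mem_insert.1 ha with rfl | ha
          · exact Finset.mem_filter.2 ⟨(hmemF _ a).2 rfl, he⟩
          · rw [Finset.mem_filter] at ha ⊢
            refine ⟨ha.1, ?_⟩
            have hmn := h4 i a ((hmemF _ a).1 ha.1).symm ha.2
            rcases h1 a with h' | h'
            · rw [h', he] at hmn; norm_num at hmn
            · exact h'
        have hcard := Finset.card_le_card hsub
        have hnm : i ∉ (F (c i).1).filter fun j => (c j).2 < (c i).2 :=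
          fun h => absurd (Finset.mem_filter.1 h).2 (lt_irrefl _)
        rw [Finset.card_insert_of_notMem hnm] at hcard
        omega
end

section
/- Let B ⊆ ℝ² and let (c_i)_{i ∈ I} = ((x_i, y_i))_{i ∈ I} be a countable family of pairwise distinct points of the interior Int(B) such that each vertical line contains only finitely many c_i and the set {x_i : i ∈ I} has no accumulation point lying in pr₁(B). Then there exists a family (η_i)_{i ∈ I} of positive real numbers such that: (i) x_i = x_j implies η_i = η_j; (ii) for all i, j ∈ I with x_i ≠ x_j, |x_j − x_i| > η_i/2; and (iii) for every i ∈ I, the set [x_i − η_i/2, x_i + η_i/2] × (y_i − η_i/2, y_i + η_i/2) is contained in Int(B). -/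
open Filter

/-- Given countably many pairwise distinct points `cᵢ = (xᵢ, yᵢ)` of the interior of
`B ⊆ ℝ²`, with finitely many on each vertical line and such that `{xᵢ}` has no
accumulation point in `pr₁(B)`, there exist positive widths `ηᵢ` such that: points on
the same vertical line get equal widths; strips about distinct vertical lines are
horizontally separated (`|xⱼ − xᵢ| > ηᵢ/2` whenever `xᵢ ≠ xⱼ`); and each base rectangle
`[xᵢ − ηᵢ/2, xᵢ + ηᵢ/2] × (yᵢ − ηᵢ/2, yᵢ + ηᵢ/2)` lies in the interior of `B`. -/
theorem stmt13 {I : Type*} [Countable I] (B : Set (ℝ × ℝ))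
    (c : I → ℝ × ℝ) (hinj : Function.Injective c) (hc : ∀ i, c i ∈ interior B)
    (hfin : ∀ x₀ : ℝ, {i : I | (c i).1 = x₀}.Finite)
    (hacc : ∀ x ∈ Prod.fst '' B, ¬ AccPt x (𝓟 (Set.range fun i => (c i).1))) :
    ∃ η : I → ℝ, (∀ i, 0 < η i) ∧
      (∀ i j, (c i).1 = (c j).1 → η i = η j) ∧
      (∀ i j, (c i).1 ≠ (c j).1 → η i / 2 < |(c j).1 - (c i).1|) ∧
      (∀ i, Set.Icc ((c i).1 - η i / 2) ((c i).1 + η i / 2) ×ˢ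
        Set.Ioo ((c i).2 - η i / 2) ((c i).2 + η i / 2) ⊆ interior B) := by
  classical
  have hε : ∀ i, ∃ e > 0, Metric.ball (c i) e ⊆ interior B := by
    intro i
    rcases Metric.isOpen_iff.1 isOpen_interior (c i) (hc i) with ⟨e, he, hsub⟩
    exact ⟨e, he, hsub⟩
  choose ε hεpos hεsub using hε
  have hδ : ∀ i, ∃ d > 0, ∀ j, (c j).1 ≠ (c i).1 → d ≤ |(c j).1 - (c i).1| := by
    intro i
    have hx : (c i).1 ∈ Prod.fst '' B := ⟨c i, interior_subset (hc i), rfl⟩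
    have h := hacc _ hx
    rw [accPt_iff_nhds] at h
    push_neg at h
    obtain ⟨U, hU, hU'⟩ := h
    rcases Metric.mem_nhds_iff.1 hU with ⟨d, hd, hsub⟩
    refine ⟨d, hd, fun j hj => ?_⟩
    by_contra hlt
    push_neg at hlt
    have hball : (c j).1 ∈ Metric.ball (c i).1 d := by
      rw [Metric.mem_ball, Real.dist_eq]; exact hlt
    exact hj (hU' _ ⟨hsub hball, ⟨j, rfl⟩⟩)
  choose δ hδpos hδsep using hδ
  set m : I → ℝ := fun i => min (ε i) (δ i) with hm
  have hmpos : ∀ i, 0 < m i := fun i => lt_min (hεpos i) (hδpos i)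
  set S : I → Finset I := fun i => (hfin (c i).1).toFinset with hS
  have hmemS : ∀ i, i ∈ S i := fun i => (Set.Finite.mem_toFinset _).2 rfl
  refine ⟨fun i => (S i).inf' ⟨i, hmemS i⟩ m, ?_, ?_, ?_, ?_⟩
  · intro i
    exact (Finset.lt_inf'_iff _).2 fun j _ => hmpos j
  · intro i j hij
    have hSS : S i = S j := by
      ext k
      simp only [hS, Set.Finite.mem_toFinset, Set.mem_setOf_eq, hij]
    have h1 : (S i).inf' ⟨i, hmemS i⟩ m ≤ (S j).inf' ⟨j, hmemS j⟩ m := by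
      apply Finset.le_inf'
      intro k hk
      exact Finset.inf'_le m (hSS ▸ hk)
    have h2 : (S j).inf' ⟨j, hmemS j⟩ m ≤ (S i).inf' ⟨i, hmemS i⟩ m := by
      apply Finset.le_inf'
      intro k hk
      exact Finset.inf'_le m (hSS ▸ hk)
    linarith
  · intro i j hij
    have h1 : (S i).inf' ⟨i, hmemS i⟩ m ≤ m i := Finset.inf'_le m (hmemS i)
    have h2 : m i ≤ δ i := min_le_right _ _
    have h3 := hδsep i j (Ne.symm hij)
    have h0 : 0 < (S i).inf' ⟨i, hmemS i⟩ m := (Finset.lt_inf'_iff _).2 fun j _ => hmpos j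
    linarith
  · intro i p hp
    obtain ⟨hp1, hp2⟩ := hp
    apply hεsub i
    rw [Metric.mem_ball, Prod.dist_eq]
    have h1 : (S i).inf' ⟨i, hmemS i⟩ m ≤ m i := Finset.inf'_le m (hmemS i)
    have h2 : m i ≤ ε i := min_le_left _ _
    have h0 : 0 < (S i).inf' ⟨i, hmemS i⟩ m := (Finset.lt_inf'_iff _).2 fun j _ => hmpos j
    rw [Set.mem_Icc] at hp1
    rw [Set.mem_Ioo] at hp2
    apply max_lt <;> rw [Real.dist_eq, abs_sub_lt_iff] <;> constructor <;> linarith [hp1.1, hp1.2, hp2.1, hp2.2]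
end

section
/- For (x₀, y₀) ∈ ℝ², ε ∈ {+1,−1}, η > 0 and a continuous function γ : [x₀ − η/2, x₀ + η/2] → ℝ with ε·y₀ > ε·γ(x) for all x in that interval, let σ^ε_{η,γ}(x₀,y₀) := {(x, y) ∈ ℝ² : x₀ − η/2 ≤ x ≤ x₀ + η/2 and ε·y ≥ ε·γ(x)}. Let (c_i)_{i ∈ I} = ((x_i, y_i))_{i ∈ I} be a family of points of ℝ² and for each i let σ_i := σ^{ε_i}_{η_i, γ_i}(x_i, y_i) be a half-strip as above. Assume: (i) whenever x_i = x_j, one has η_i = η_j; and (ii) for any two distinct indices i, j ∈ I, the intersection σ_i ∩ σ_j is either empty or equal to σ_i or equal to σ_j. Then for all i, j ∈ I with x_i = x_j and y_i > y_j, one has ε_i ≥ ε_j; that is, it cannot happen that ε_i = −1 and ε_j = +1. -/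
/-- The half-strip of center line `{x = x₀}`, sign `ε`, width `η` and bounding curve
`γ`: `σ^ε_{η,γ} = {(x, y) : x₀ − η/2 ≤ x ≤ x₀ + η/2 ∧ ε·y ≥ ε·γ(x)}`. -/
def halfStrip (x₀ ε η : ℝ) (γ : ℝ → ℝ) : Set (ℝ × ℝ) :=
  {p : ℝ × ℝ | x₀ - η / 2 ≤ p.1 ∧ p.1 ≤ x₀ + η / 2 ∧ ε * γ p.1 ≤ ε * p.2}

/-- If a family of half-strips `σᵢ` centered at points `cᵢ` (with signs `εᵢ`, widths
`ηᵢ > 0`, and continuous bounding curves `γᵢ` with `εᵢ·yᵢ > εᵢ·γᵢ(x)` on the relevant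
interval) satisfies: half-strips with the same center line have equal widths, and any
two distinct half-strips are nested or disjoint; then whenever `cᵢ` lies above `cⱼ` on
the same vertical line one has `εᵢ ≥ εⱼ`. -/
theorem stmt14 {I : Type*} (c : I → ℝ × ℝ) (ε : I → ℝ)
    (hε : ∀ i, ε i = 1 ∨ ε i = -1)
    (η : I → ℝ) (hη : ∀ i, 0 < η i) (γ : I → ℝ → ℝ)
    (hγcont : ∀ i, ContinuousOn (γ i)
      (Set.Icc ((c i).1 - η i / 2) ((c i).1 + η i / 2)))
    (hγ : ∀ i, ∀ x ∈ Set.Icc ((c i).1 - η i / 2) ((c i).1 + η i / 2),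
      ε i * γ i x < ε i * (c i).2)
    (hwidth : ∀ i j, (c i).1 = (c j).1 → η i = η j)
    (hnest : ∀ i j, i ≠ j →
      halfStrip (c i).1 (ε i) (η i) (γ i) ∩ halfStrip (c j).1 (ε j) (η j) (γ j) = ∅ ∨
      halfStrip (c i).1 (ε i) (η i) (γ i) ∩ halfStrip (c j).1 (ε j) (η j) (γ j) =
        halfStrip (c i).1 (ε i) (η i) (γ i) ∨
      halfStrip (c i).1 (ε i) (η i) (γ i) ∩ halfStrip (c j).1 (ε j) (η j) (γ j) =
        halfStrip (c j).1 (ε j) (η j) (γ j))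
    (i j : I) (hx : (c i).1 = (c j).1) (hy : (c j).2 < (c i).2) :
    ε j ≤ ε i := by
  rcases hε i with hi | hi
  · rcases hε j with hj | hj <;> rw [hi, hj] <;> norm_num
  rcases hε j with hj | hj
  swap
  · rw [hi, hj]
  -- ε i = -1, ε j = 1 : contradiction
  exfalso
  have hij : i ≠ j := by
    intro h; rw [h, hj] at hi; norm_num at hi
  set xi := (c i).1
  have hw : η i = η j := hwidth i j hx
  have hmemI : xi ∈ Set.Icc (xi - η i / 2) (xi + η i / 2) := by
    constructor <;> nlinarith [hη i]
  have hmemJ : xi ∈ Set.Icc ((c j).1 - η j / 2) ((c j).1 + η j / 2) := by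
    rw [← hx, ← hw]; exact hmemI
  -- y_i < γ i x_i  and  γ j x_i < y_j
  have hgi : (c i).2 < γ i xi := by
    have := hγ i xi hmemI; rw [hi] at this; linarith
  have hgj : γ j xi < (c j).2 := by
    have := hγ j xi hmemJ; rw [hj] at this; linarith
  -- membership helpers
  have memi : ∀ y : ℝ, y ≤ γ i xi → (xi, y) ∈ halfStrip (c i).1 (ε i) (η i) (γ i) := by
    intro y hylt
    refine ⟨hmemI.1, hmemI.2, ?_⟩
    rw [hi]; simp only; linarith
  have memj : ∀ y : ℝ, γ j xi ≤ y → (xi, y) ∈ halfStrip (c j).1 (ε j) (η j) (γ j) := by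
    intro y hylt
    refine ⟨by rw [← hx, ← hw]; exact hmemI.1, by rw [← hx, ← hw]; exact hmemI.2, ?_⟩
    rw [hj]; simp only; linarith
  rcases hnest i j hij with h | h | h
  · -- intersection empty, but (x_i, y_i) is in both
    have : ((xi, (c i).2) : ℝ × ℝ) ∈ (∅ : Set (ℝ × ℝ)) := by
      rw [← h]
      exact ⟨memi _ (le_of_lt hgi), memj _ (by linarith)⟩
    exact this
  · -- intersection = σ_i : take y = γ j x_i - 1 ∈ σ_i, must be in σ_j
    have hmem : ((xi, γ j xi - 1) : ℝ × ℝ) ∈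
        halfStrip (c i).1 (ε i) (η i) (γ i) ∩ halfStrip (c j).1 (ε j) (η j) (γ j) := by
      rw [h]; exact memi _ (by linarith)
    have := hmem.2.2.2
    rw [hj] at this; simp only at this; linarith
  · -- intersection = σ_j : take y = γ i x_i + 1 ∈ σ_j, must be in σ_i
    have hmem : ((xi, γ i xi + 1) : ℝ × ℝ) ∈
        halfStrip (c i).1 (ε i) (η i) (γ i) ∩ halfStrip (c j).1 (ε j) (η j) (γ j) := by
      rw [h]; exact memj _ (by linarith)
    have := hmem.1.2.2
    rw [hi] at this; simp only at this; linarith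
end
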